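/- arXiv:1807.04518 — 7 statements merged into one kernel-verified Lean document; each statement's English description precedes it below -/
import Mathlib

section
/- Let A ∈ ℝ^{n×d} have a singular value decomposition A = U Σ Vᵀ with singular values σ₁ ≥ σ₂ ≥ … ≥ σ_{min(n,d)} ≥ 0, let X ∈ ℝ^{d×j} be a matrix with orthonormal columns, and let m be an integer with 1 ≤ m ≤ min(n,d) − 1. Then 0 ≤ ‖AX‖_F² − ‖A^(m)X‖_F² ≤ j · σ_{m+1}². -/
open Matrix

/-- Identify a plain vector in `Fin d → ℝ` with a point of Euclidean space `ℝ^d`. -/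
noncomputable def toEuc {d : ℕ} (v : Fin d → ℝ) : EuclideanSpace ℝ (Fin d) :=
  (WithLp.equiv 2 (Fin d → ℝ)).symm v

/-- Squared Euclidean distance from a point (given as a row vector) to a set. -/
noncomputable def rowDistSq {d : ℕ} (p : Fin d → ℝ) (C : Set (EuclideanSpace ℝ (Fin d))) : ℝ :=
  (Metric.infDist (toEuc p) C) ^ 2

/-- `dist²(A, C)`: sum of squared Euclidean distances of the rows of `A` to the set `C`. -/
noncomputable def matDistSq {n d : ℕ} (A : Matrix (Fin n) (Fin d) ℝ)
    (C : Set (EuclideanSpace ℝ (Fin d))) : ℝ :=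
  ∑ i, rowDistSq (A i) C

/-- Squared Frobenius norm of a matrix. -/
noncomputable def frobSq {n d : ℕ} (A : Matrix (Fin n) (Fin d) ℝ) : ℝ :=
  ∑ i, ∑ j, (A i j) ^ 2

/-- The rectangular diagonal `n × d` matrix with diagonal entries `σ 0, σ 1, …`. -/
def svdDiag (n d : ℕ) (σ : ℕ → ℝ) : Matrix (Fin n) (Fin d) ℝ :=
  Matrix.of fun i j => if (i : ℕ) = (j : ℕ) then σ (i : ℕ) else 0

/-- The truncation keeping only the first `m` diagonal entries of `svdDiag n d σ`. -/
def svdDiagTrunc (n d m : ℕ) (σ : ℕ → ℝ) : Matrix (Fin n) (Fin d) ℝ :=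
  Matrix.of fun i j => if (i : ℕ) = (j : ℕ) ∧ (i : ℕ) < m then σ (i : ℕ) else 0

lemma frobSq_eq_trace {n d : ℕ} (A : Matrix (Fin n) (Fin d) ℝ) :
    frobSq A = (Aᵀ * A).trace := by
  simp only [frobSq, Matrix.trace, Matrix.diag, Matrix.mul_apply, Matrix.transpose_apply, sq]
  exact Finset.sum_comm

lemma frobSq_mul_orth {n n' d : ℕ} (U : Matrix (Fin n) (Fin n') ℝ) (hU : Uᵀ * U = 1)
    (B : Matrix (Fin n') (Fin d) ℝ) : frobSq (U * B) = frobSq B := by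
  rw [frobSq_eq_trace, frobSq_eq_trace, Matrix.transpose_mul, Matrix.mul_assoc,
    ← Matrix.mul_assoc Uᵀ, hU, Matrix.one_mul]

lemma svdDiag_tr_mul (n d : ℕ) (σ : ℕ → ℝ) :
    (svdDiag n d σ)ᵀ * svdDiag n d σ =
      Matrix.diagonal (fun l : Fin d => if (l : ℕ) < n then σ (l : ℕ) ^ 2 else 0) := by
  ext l l'
  simp only [Matrix.mul_apply, Matrix.transpose_apply, svdDiag, Matrix.of_apply,
    Matrix.diagonal_apply]
  by_cases hl : (l : ℕ) < n
  · rw [Finset.sum_eq_single (⟨(l : ℕ), hl⟩ : Fin n)]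
    · by_cases h : l = l'
      · subst h; simp [hl, sq]
      · have : (l : ℕ) ≠ (l' : ℕ) := fun hh => h (Fin.ext hh)
        simp [this, h]
    · intro i _ hi
      have : (i : ℕ) ≠ (l : ℕ) := fun hh => hi (Fin.ext hh)
      simp [this]
    · simp
  · have h0 : ∀ i : Fin n, (i : ℕ) ≠ (l : ℕ) := fun i hh => hl (hh ▸ i.isLt)
    by_cases h : l = l'
    · subst h; simp [hl, fun i : Fin n => h0 i]
    · simp [h, fun i : Fin n => h0 i]

lemma svdDiagTrunc_tr_mul (n d m : ℕ) (σ : ℕ → ℝ) :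
    (svdDiagTrunc n d m σ)ᵀ * svdDiagTrunc n d m σ =
      Matrix.diagonal (fun l : Fin d =>
        if (l : ℕ) < n ∧ (l : ℕ) < m then σ (l : ℕ) ^ 2 else 0) := by
  ext l l'
  simp only [Matrix.mul_apply, Matrix.transpose_apply, svdDiagTrunc, Matrix.of_apply,
    Matrix.diagonal_apply]
  by_cases hl : (l : ℕ) < n
  · rw [Finset.sum_eq_single (⟨(l : ℕ), hl⟩ : Fin n)]
    · by_cases h : l = l'
      · subst h
        by_cases hm : (l : ℕ) < m <;> simp [hl, hm, sq]
      · have : (l : ℕ) ≠ (l' : ℕ) := fun hh => h (Fin.ext hh)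
        simp [this, h]
    · intro i _ hi
      have : (i : ℕ) ≠ (l : ℕ) := fun hh => hi (Fin.ext hh)
      simp [this]
    · simp
  · have h0 : ∀ i : Fin n, (i : ℕ) ≠ (l : ℕ) := fun i hh => hl (hh ▸ i.isLt)
    by_cases h : l = l'
    · subst h; simp [hl, fun i : Fin n => h0 i]
    · simp [h, fun i : Fin n => h0 i]

lemma trace_conj_diag {d j : ℕ} (g : Fin d → ℝ) (Y : Matrix (Fin d) (Fin j) ℝ) :
    (Yᵀ * Matrix.diagonal g * Y).trace = ∑ l, g l * ∑ k, (Y l k) ^ 2 := by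
  have hD : Matrix.diagonal g * Y = Matrix.of fun l k => g l * Y l k := by
    ext l k; simp [Matrix.diagonal_mul]
  rw [Matrix.mul_assoc, hD]
  simp only [Matrix.trace, Matrix.diag, Matrix.mul_apply, Matrix.transpose_apply,
    Matrix.of_apply, sq, Finset.mul_sum]
  rw [Finset.sum_comm]
  congr 1; ext l; congr 1; ext k; ring

/-- if `A = U Σ Vᵀ` is an SVD of `A ∈ ℝ^{n×d}`, `X ∈ ℝ^{d×j}` has
orthonormal columns, and `1 ≤ m ≤ min(n,d) - 1`, then
`0 ≤ ‖AX‖_F² - ‖A^(m)X‖_F² ≤ j · σ_{m+1}²`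
(σ is 0-indexed here, so the 1-indexed `σ_{m+1}` is `σ m`). -/
theorem stmt1 {n d j : ℕ} (A : Matrix (Fin n) (Fin d) ℝ)
    (U : Matrix (Fin n) (Fin n) ℝ) (V : Matrix (Fin d) (Fin d) ℝ) (σ : ℕ → ℝ)
    (hU : Uᵀ * U = 1) (hV : Vᵀ * V = 1)
    (hσ0 : ∀ i, i < min n d → 0 ≤ σ i)
    (hσa : ∀ i i', i ≤ i' → i' < min n d → σ i' ≤ σ i)
    (hA : A = U * svdDiag n d σ * Vᵀ)
    (X : Matrix (Fin d) (Fin j) ℝ) (hX : Xᵀ * X = 1)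
    (m : ℕ) (hm1 : 1 ≤ m) (hm2 : m + 1 ≤ min n d) :
    0 ≤ frobSq (A * X) - frobSq ((U * svdDiagTrunc n d m σ * Vᵀ) * X) ∧
      frobSq (A * X) - frobSq ((U * svdDiagTrunc n d m σ * Vᵀ) * X) ≤ (j : ℝ) * (σ m) ^ 2 := by

  set Y : Matrix (Fin d) (Fin j) ℝ := Vᵀ * X with hYdef
  set r : Fin d → ℝ := fun l => ∑ k, (Y l k) ^ 2 with hrdef
  have hr0 : ∀ l, 0 ≤ r l := fun l => Finset.sum_nonneg fun k _ => sq_nonneg _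
  have h1 : frobSq (A * X) = ∑ l : Fin d, (if (l : ℕ) < n then σ (l : ℕ) ^ 2 else 0) * r l := by
    rw [hA, Matrix.mul_assoc, Matrix.mul_assoc, frobSq_mul_orth U hU, frobSq_eq_trace,
      Matrix.transpose_mul, ← Matrix.mul_assoc, Matrix.mul_assoc (Vᵀ * X)ᵀ,
      svdDiag_tr_mul, trace_conj_diag]
  have h2 : frobSq ((U * svdDiagTrunc n d m σ * Vᵀ) * X) =
      ∑ l : Fin d, (if (l : ℕ) < n ∧ (l : ℕ) < m then σ (l : ℕ) ^ 2 else 0) * r l := by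
    rw [Matrix.mul_assoc, Matrix.mul_assoc, frobSq_mul_orth U hU, frobSq_eq_trace,
      Matrix.transpose_mul, ← Matrix.mul_assoc, Matrix.mul_assoc (Vᵀ * X)ᵀ,
      svdDiagTrunc_tr_mul, trace_conj_diag]
  have hdiff : frobSq (A * X) - frobSq ((U * svdDiagTrunc n d m σ * Vᵀ) * X) =
      ∑ l : Fin d, (if (l : ℕ) < n ∧ m ≤ (l : ℕ) then σ (l : ℕ) ^ 2 else 0) * r l := by
    rw [h1, h2, ← Finset.sum_sub_distrib]
    refine Finset.sum_congr rfl fun l _ => ?_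
    rw [← sub_mul]
    congr 1
    split_ifs <;> first | ring1 | (exfalso; omega)
  have hVV : V * Vᵀ = 1 := mul_eq_one_comm.mp hV
  have hYfrob : ∑ l, r l = (j : ℝ) := by
    have : ∑ l, r l = frobSq Y := rfl
    rw [this, frobSq_eq_trace, hYdef, Matrix.transpose_mul, Matrix.transpose_transpose,
      Matrix.mul_assoc, ← Matrix.mul_assoc V, hVV, Matrix.one_mul, hX]
    simp
  have hmlt : m < min n d := hm2
  have hσm0 : 0 ≤ σ m := hσ0 m hmlt
  constructor
  · rw [hdiff]
    refine Finset.sum_nonneg fun l _ => mul_nonneg ?_ (hr0 l)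
    split_ifs
    · exact sq_nonneg _
    · exact le_refl 0
  · rw [hdiff]
    calc ∑ l : Fin d, (if (l : ℕ) < n ∧ m ≤ (l : ℕ) then σ (l : ℕ) ^ 2 else 0) * r l
        ≤ ∑ l : Fin d, σ m ^ 2 * r l := by
          refine Finset.sum_le_sum fun l _ => mul_le_mul_of_nonneg_right ?_ (hr0 l)
          split_ifs with h
          · exact pow_le_pow_left₀ (hσ0 _ (lt_min h.1 l.isLt))
              (hσa m l h.2 (lt_min h.1 l.isLt)) 2
          · exact sq_nonneg _
      _ = (j : ℝ) * σ m ^ 2 := by rw [← Finset.mul_sum, hYfrob, mul_comm]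
end

section
/- Let A ∈ ℝ^{n×d} have a singular value decomposition A = U Σ Vᵀ, let j ≥ 1 be an integer with j ≤ d−1, let ε > 0, and set m = min{n, d, j + ⌈j/ε⌉ − 1}. Let S ∈ ℝ^{m×d} be the matrix consisting of the first m rows of Σ^(m)Vᵀ and let Δ = ‖A − A^(m)‖_F². Then for every j-dimensional linear subspace L of ℝ^d, dist²(A,L) ≤ Σ_{i=1}^m dist²(S_{i*},L) + Δ ≤ (1+ε) · dist²(A,L). -/
/-!
Write `vₜ` for the columns of `V` and `wₜ = dist²(vₜ, L) ∈ [0, 1]`. Since `dist²(·, L)` is the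
quadratic form of the projection onto `Lᗮ` and `U` is orthogonal,
`dist²(A, L) = ∑_{t < min n d} σₜ² wₜ`, `∑ᵢ dist²(S_{i*}, L) = ∑_{t < m} σₜ² wₜ` and
`Δ = ∑_{m ≤ t < min n d} σₜ²`, while `∑_{t < d} (1 - wₜ) = j` is the trace of the projection
onto `L`. The lower bound is `wₜ ≤ 1`. For the upper bound, with `t₀ = ∑_{t < m} (1 - wₜ)`, the
excess `∑_{t ≥ m} σₜ² (1 - wₜ)` is at most `σₘ² (j - t₀)`, whereas
`∑_{t < m} σₜ² wₜ ≥ σₘ² (m - t₀)`, and `j - t₀ ≤ ε (m - t₀)` since `ε m ≥ j`.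
-/

open Matrix

open Finset Module

theorem infDist_eq_norm_starProjection_orthogonal {E : Type*} [NormedAddCommGroup E]
    [InnerProductSpace ℝ E] (K : Submodule ℝ E) [K.HasOrthogonalProjection] (x : E) :
    Metric.infDist x K = ‖Kᗮ.starProjection x‖ := by
  rw [Metric.infDist_eq_iInf, Submodule.starProjection_orthogonal_val,
    Submodule.starProjection_minimal]
  exact iInf_congr fun y => dist_eq_norm _ _

theorem exists_rowDistSq_eq_dotProduct_mulVec {d : ℕ}
    (L : Submodule ℝ (EuclideanSpace ℝ (Fin d))) :
    ∃ B : Matrix (Fin d) (Fin d) ℝ,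
      (∀ p, rowDistSq p L = p ⬝ᵥ B *ᵥ p) ∧ B.trace = d - finrank ℝ L := by
  set P : EuclideanSpace ℝ (Fin d) →ₗ[ℝ] EuclideanSpace ℝ (Fin d) := Lᗮ.starProjection
  set B := Matrix.toEuclideanLin.symm P
  refine ⟨B, fun p => ?_, ?_⟩
  · have hP : P (toEuc p) = WithLp.toLp 2 (B *ᵥ p) := by
      rw [← LinearEquiv.apply_symm_apply Matrix.toEuclideanLin P]; rfl
    calc rowDistSq p L = ‖P (toEuc p)‖ ^ 2 := by
          rw [rowDistSq, infDist_eq_norm_starProjection_orthogonal]; rfl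
      _ = inner ℝ (P (toEuc p)) (toEuc p) := by
          exact (Lᗮ.re_inner_starProjection_eq_normSq (toEuc p)).symm
      _ = p ⬝ᵥ B *ᵥ p := by
          rw [hP, toEuc, WithLp.equiv_symm_apply, EuclideanSpace.inner_toLp_toLp]; simp
  · have hproj : LinearMap.IsProj Lᗮ P :=
      ⟨fun x => Lᗮ.starProjection_apply_mem x, fun x hx => Lᗮ.starProjection_eq_self_iff.mpr hx⟩
    have hrank : (finrank ℝ L + finrank ℝ Lᗮ : ℝ) = d := by
      exact_mod_cast (by simpa using L.finrank_add_finrank_orthogonal)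
    rw [← Matrix.trace_toLin_eq _ (EuclideanSpace.basisFun (Fin d) ℝ).toBasis,
      ← Matrix.toEuclideanLin_eq_toLin_orthonormal, LinearEquiv.apply_symm_apply, hproj.trace]
    linarith

section WeightedSums

variable {σ w : ℕ → ℝ} {μ m : ℕ}

theorem sum_range_sq_mul_le_add (hw1 : ∀ t, w t ≤ 1) (hmμ : m ≤ μ) :
    ∑ t ∈ range μ, σ t ^ 2 * w t ≤ ∑ t ∈ range m, σ t ^ 2 * w t + ∑ t ∈ Ico m μ, σ t ^ 2 := by
  rw [← sum_range_add_sum_Ico _ hmμ]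
  gcongr with t
  exact mul_le_of_le_one_right (sq_nonneg _) (hw1 t)

theorem sum_Ico_sq_mul_one_sub_le {d j : ℕ} {ε : ℝ} (hε : 0 < ε)
    (hσ0 : ∀ t < μ, 0 ≤ σ t) (hσ : ∀ s t, s ≤ t → t < μ → σ t ≤ σ s)
    (hw0 : ∀ t, 0 ≤ w t) (hw1 : ∀ t, w t ≤ 1) (hμd : μ ≤ d)
    (hw : ∑ t ∈ range d, (1 - w t) = j) (hjm : j ≤ m) (hεm : j ≤ ε * m) (hmμ : m < μ) :
    ∑ t ∈ Ico m μ, σ t ^ 2 * (1 - w t) ≤ ε * ∑ t ∈ range μ, σ t ^ 2 * w t := by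
  set t₀ := ∑ t ∈ range m, (1 - w t)
  have hw1' : ∀ t, 0 ≤ 1 - w t := fun t => sub_nonneg.2 (hw1 t)
  have hsplit : t₀ + ∑ t ∈ Ico m d, (1 - w t) = j := by
    rw [sum_range_add_sum_Ico _ (hmμ.le.trans hμd), hw]
  have ht₀ : 0 ≤ t₀ := sum_nonneg fun t _ => hw1' t
  have ht₀j : t₀ ≤ j := by
    linarith [sum_nonneg fun t (_ : t ∈ Ico m d) => hw1' t]
  have htail : ∑ t ∈ Ico m μ, σ t ^ 2 * (1 - w t) ≤ σ m ^ 2 * (j - t₀) := calc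
    ∑ t ∈ Ico m μ, σ t ^ 2 * (1 - w t) ≤ ∑ t ∈ Ico m μ, σ m ^ 2 * (1 - w t) := by
      gcongr with t ht
      · exact hw1' t
      · exact hσ0 t (mem_Ico.1 ht).2
      · exact hσ m t (mem_Ico.1 ht).1 (mem_Ico.1 ht).2
    _ ≤ ∑ t ∈ Ico m d, σ m ^ 2 * (1 - w t) :=
      sum_le_sum_of_subset_of_nonneg (Ico_subset_Ico le_rfl hμd)
        fun t _ _ => mul_nonneg (sq_nonneg _) (hw1' t)
    _ = σ m ^ 2 * (j - t₀) := by rw [← mul_sum]; congr 1; linarith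
  have hhead : σ m ^ 2 * (m - t₀) ≤ ∑ t ∈ range μ, σ t ^ 2 * w t := calc
    σ m ^ 2 * (m - t₀) = ∑ t ∈ range m, σ m ^ 2 * w t := by
      simp [t₀, ← mul_sum, sum_sub_distrib]
    _ ≤ ∑ t ∈ range m, σ t ^ 2 * w t := by
      gcongr with t ht
      · exact hw0 t
      · exact hσ0 m hmμ
      · exact hσ t m (mem_range.1 ht).le hmμ
    _ ≤ ∑ t ∈ range μ, σ t ^ 2 * w t :=
      sum_le_sum_of_subset_of_nonneg (range_subset_range.2 hmμ.le)
        fun t _ _ => mul_nonneg (sq_nonneg _) (hw0 t)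
  have hscalar : (j : ℝ) - t₀ ≤ ε * (m - t₀) := by
    have hjm' : (j : ℝ) ≤ m := by exact_mod_cast hjm
    rcases le_total ε 1 with h | h <;> nlinarith
  calc ∑ t ∈ Ico m μ, σ t ^ 2 * (1 - w t) ≤ σ m ^ 2 * (j - t₀) := htail
    _ ≤ σ m ^ 2 * (ε * (m - t₀)) := by gcongr
    _ = ε * (σ m ^ 2 * (m - t₀)) := by ring
    _ ≤ ε * ∑ t ∈ range μ, σ t ^ 2 * w t := by gcongr

theorem sum_range_sq_mul_bounds {d j : ℕ} {ε : ℝ} (hε : 0 < ε)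
    (hσ0 : ∀ t < μ, 0 ≤ σ t) (hσ : ∀ s t, s ≤ t → t < μ → σ t ≤ σ s)
    (hw0 : ∀ t, 0 ≤ w t) (hw1 : ∀ t, w t ≤ 1) (hmμ : m ≤ μ) (hμd : μ ≤ d)
    (hw : ∑ t ∈ range d, (1 - w t) = j) (hsize : m < μ → j ≤ m ∧ j ≤ ε * m) :
    ∑ t ∈ range μ, σ t ^ 2 * w t ≤ ∑ t ∈ range m, σ t ^ 2 * w t + ∑ t ∈ Ico m μ, σ t ^ 2 ∧
      ∑ t ∈ range m, σ t ^ 2 * w t + ∑ t ∈ Ico m μ, σ t ^ 2 ≤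
        (1 + ε) * ∑ t ∈ range μ, σ t ^ 2 * w t := by
  refine ⟨sum_range_sq_mul_le_add hw1 hmμ, ?_⟩
  have hsplit : ∑ t ∈ range m, σ t ^ 2 * w t + ∑ t ∈ Ico m μ, σ t ^ 2 =
      ∑ t ∈ range μ, σ t ^ 2 * w t + ∑ t ∈ Ico m μ, σ t ^ 2 * (1 - w t) := by
    rw [← sum_range_add_sum_Ico _ hmμ, add_assoc, ← sum_add_distrib]
    simp only [mul_sub, mul_one, add_sub_cancel]
  rw [hsplit]
  rcases hmμ.lt_or_eq with hlt | rfl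
  · obtain ⟨hjm, hεm⟩ := hsize hlt
    linarith [sum_Ico_sq_mul_one_sub_le hε hσ0 hσ hw0 hw1 hμd hw hjm hεm hlt]
  · have hnonneg : 0 ≤ ∑ t ∈ range m, σ t ^ 2 * w t :=
      sum_nonneg fun t _ => mul_nonneg (sq_nonneg _) (hw0 t)
    rw [Ico_self, sum_empty]
    linarith [mul_nonneg hε.le hnonneg]

end WeightedSums

theorem le_and_le_mul_add_ceil_div_sub_one {j : ℕ} {ε : ℝ} (hε : 0 < ε) (hj : 1 ≤ j) :
    j ≤ j + ⌈(j : ℝ) / ε⌉₊ - 1 ∧ (j : ℝ) ≤ ε * (j + ⌈(j : ℝ) / ε⌉₊ - 1 : ℕ) := by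
  set c := ⌈(j : ℝ) / ε⌉₊
  have hc : (j : ℝ) ≤ ε * c := by
    have := Nat.le_ceil ((j : ℝ) / ε)
    rw [div_le_iff₀ hε] at this
    linarith
  have hc1 : 1 ≤ c := Nat.one_le_ceil_iff.2 (by positivity)
  refine ⟨by omega, hc.trans ?_⟩
  gcongr
  omega

section DistanceSums

variable {n d : ℕ}

theorem rowDistSq_bot (p : Fin d → ℝ) :
    rowDistSq p (⊥ : Submodule ℝ (EuclideanSpace ℝ (Fin d))) = p ⬝ᵥ p := by
  rw [rowDistSq, Submodule.bot_coe, Metric.infDist_singleton, dist_zero_right,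
    EuclideanSpace.real_norm_sq_eq]
  simp [toEuc, dotProduct, sq]

theorem frobSq_eq_matDistSq_bot (M : Matrix (Fin n) (Fin d) ℝ) :
    frobSq M = matDistSq M (⊥ : Submodule ℝ (EuclideanSpace ℝ (Fin d))) := by
  simp only [frobSq, matDistSq, rowDistSq_bot, dotProduct, sq]

theorem rowDistSq_le_of_subset (p : Fin d → ℝ) {C C' : Set (EuclideanSpace ℝ (Fin d))}
    (hC : C.Nonempty) (h : C ⊆ C') : rowDistSq p C' ≤ rowDistSq p C := by
  unfold rowDistSq
  gcongr
  · exact Metric.infDist_nonneg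
  · exact Metric.infDist_le_infDist_of_subset h hC

theorem mul_mul_transpose_apply_self {B : Matrix (Fin d) (Fin d) ℝ} (M : Matrix (Fin n) (Fin d) ℝ)
    (i : Fin n) : (M * B * Mᵀ) i i = M i ⬝ᵥ B *ᵥ M i := by
  simp only [Matrix.mul_apply, dotProduct, Matrix.mulVec, Matrix.transpose_apply, mul_sum,
    sum_mul]
  rw [sum_comm]
  exact sum_congr rfl fun _ _ => sum_congr rfl fun _ _ => by ring

theorem matDistSq_eq_trace {B : Matrix (Fin d) (Fin d) ℝ} {C : Set (EuclideanSpace ℝ (Fin d))}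
    (hB : ∀ p, rowDistSq p C = p ⬝ᵥ B *ᵥ p) (M : Matrix (Fin n) (Fin d) ℝ) :
    matDistSq M C = (M * B * Mᵀ).trace := by
  simp only [matDistSq, hB, Matrix.trace, Matrix.diag, mul_mul_transpose_apply_self]

theorem matDistSq_orthogonal_mul {U : Matrix (Fin n) (Fin n) ℝ} (hU : Uᵀ * U = 1)
    (M : Matrix (Fin n) (Fin d) ℝ) (L : Submodule ℝ (EuclideanSpace ℝ (Fin d))) :
    matDistSq (U * M) L = matDistSq M L := by
  obtain ⟨B, hB, -⟩ := exists_rowDistSq_eq_dotProduct_mulVec L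
  rw [matDistSq_eq_trace hB, matDistSq_eq_trace hB, Matrix.transpose_mul,
    show U * M * B * (Mᵀ * Uᵀ) = U * (M * B * Mᵀ) * Uᵀ by simp only [Matrix.mul_assoc],
    Matrix.trace_mul_cycle, hU, Matrix.one_mul]

theorem rowDistSq_smul (c : ℝ) (p : Fin d → ℝ) (L : Submodule ℝ (EuclideanSpace ℝ (Fin d))) :
    rowDistSq (c • p) L = c ^ 2 * rowDistSq p L := by
  obtain ⟨B, hB, -⟩ := exists_rowDistSq_eq_dotProduct_mulVec L
  simp only [hB, Matrix.mulVec_smul, dotProduct_smul, smul_dotProduct, smul_eq_mul]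
  ring

theorem svdDiag_mul_row_of_lt {k : ℕ} (σ : ℕ → ℝ) (M : Matrix (Fin d) (Fin k) ℝ) (i : Fin n)
    (h : (i : ℕ) < d) : (svdDiag n d σ * M) i = σ i • M ⟨i, h⟩ := by
  ext l
  rw [Matrix.mul_apply, sum_eq_single ⟨i, h⟩]
  · simp [svdDiag]
  · intro t _ ht
    simp [svdDiag, Fin.ext_iff.not.1 ht.symm]
  · simp

theorem svdDiag_mul_row_of_le {k : ℕ} (σ : ℕ → ℝ) (M : Matrix (Fin d) (Fin k) ℝ) (i : Fin n)
    (h : d ≤ i) : (svdDiag n d σ * M) i = 0 := by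
  ext l
  rw [Pi.zero_apply, Matrix.mul_apply]
  refine sum_eq_zero fun t _ => ?_
  simp [svdDiag, show (i : ℕ) ≠ t by omega]

theorem matDistSq_svdDiag_mul (σ : ℕ → ℝ) {M : Matrix (Fin d) (Fin d) ℝ}
    {L : Submodule ℝ (EuclideanSpace ℝ (Fin d))} {w : ℕ → ℝ}
    (hw : ∀ t : Fin d, rowDistSq (M t) L = w t) :
    matDistSq (svdDiag n d σ * M) L = ∑ t ∈ range (min n d), σ t ^ 2 * w t := by
  have hrow (i : Fin n) : rowDistSq ((svdDiag n d σ * M) i) L =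
      if (i : ℕ) < d then σ i ^ 2 * w i else 0 := by
    split_ifs with h
    · rw [svdDiag_mul_row_of_lt σ M i h, rowDistSq_smul, hw]
    · rw [svdDiag_mul_row_of_le σ M i (not_lt.1 h), ← zero_smul ℝ (0 : Fin d → ℝ),
        rowDistSq_smul, zero_pow two_ne_zero, zero_mul]
  rw [matDistSq, sum_congr rfl fun i _ => hrow i,
    Fin.sum_univ_eq_sum_range (fun t => if t < d then σ t ^ 2 * w t else 0), ← sum_filter]
  congr 1
  ext t
  simp only [mem_filter, mem_range]
  omega

end DistanceSums

section SVD

variable {n d : ℕ}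

theorem dotProduct_transpose_row_self {V : Matrix (Fin d) (Fin d) ℝ} (hV : Vᵀ * V = 1)
    (t : Fin d) : Vᵀ t ⬝ᵥ Vᵀ t = 1 := by
  have := congrFun (congrFun hV t) t
  rwa [Matrix.mul_apply', Matrix.one_apply_eq] at this

theorem exists_weights_of_orthogonal {V : Matrix (Fin d) (Fin d) ℝ} (hV : Vᵀ * V = 1)
    (L : Submodule ℝ (EuclideanSpace ℝ (Fin d))) :
    ∃ w : ℕ → ℝ, (∀ t : Fin d, rowDistSq (Vᵀ t) L = w t) ∧ (∀ t, 0 ≤ w t) ∧ (∀ t, w t ≤ 1) ∧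
      ∑ t ∈ range d, (1 - w t) = finrank ℝ L := by
  refine ⟨fun t => if h : t < d then rowDistSq (Vᵀ ⟨t, h⟩) L else 0, fun t => by simp,
    fun t => ?_, fun t => ?_, ?_⟩
  · dsimp only
    split_ifs
    exacts [sq_nonneg _, le_rfl]
  · dsimp only
    split_ifs with h
    · calc rowDistSq (Vᵀ ⟨t, h⟩) L
          ≤ rowDistSq (Vᵀ ⟨t, h⟩) (⊥ : Submodule ℝ (EuclideanSpace ℝ (Fin d))) :=
            rowDistSq_le_of_subset _ ⟨0, rfl⟩ (by simp)
        _ = 1 := by rw [rowDistSq_bot, dotProduct_transpose_row_self hV]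
    · exact zero_le_one
  · obtain ⟨B, hB, htr⟩ := exists_rowDistSq_eq_dotProduct_mulVec L
    have hsum : ∑ t : Fin d, rowDistSq (Vᵀ t) L = d - finrank ℝ L := by
      rw [← matDistSq, matDistSq_eq_trace hB, Matrix.transpose_transpose, Matrix.trace_mul_cycle,
        mul_eq_one_comm.1 hV, Matrix.one_mul, htr]
    rw [sum_sub_distrib, ← Fin.sum_univ_eq_sum_range (fun t => if h : t < d then _ else 0)]
    simp [hsum]

theorem frobSq_orthogonal_mul_svdDiag_mul {U : Matrix (Fin n) (Fin n) ℝ}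
    {V : Matrix (Fin d) (Fin d) ℝ} (hU : Uᵀ * U = 1) (hV : Vᵀ * V = 1) (σ : ℕ → ℝ) :
    frobSq (U * svdDiag n d σ * Vᵀ) = ∑ t ∈ range (min n d), σ t ^ 2 := by
  have hunit (t : Fin d) :
      rowDistSq (Vᵀ t) (⊥ : Submodule ℝ (EuclideanSpace ℝ (Fin d))) = 1 := by
    rw [rowDistSq_bot, dotProduct_transpose_row_self hV]
  rw [frobSq_eq_matDistSq_bot, Matrix.mul_assoc, matDistSq_orthogonal_mul hU,
    matDistSq_svdDiag_mul (w := fun _ => 1) σ hunit]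
  simp

theorem frobSq_svd_sub_svdDiagTrunc {U : Matrix (Fin n) (Fin n) ℝ}
    {V : Matrix (Fin d) (Fin d) ℝ} (hU : Uᵀ * U = 1) (hV : Vᵀ * V = 1) (σ : ℕ → ℝ) (m : ℕ) :
    frobSq (U * svdDiag n d σ * Vᵀ - U * svdDiagTrunc n d m σ * Vᵀ) =
      ∑ t ∈ Ico m (min n d), σ t ^ 2 := by
  have hdiff : svdDiag n d σ - svdDiagTrunc n d m σ =
      svdDiag n d fun t => if t < m then 0 else σ t := by
    ext i k
    simp only [Matrix.sub_apply, svdDiag, svdDiagTrunc, Matrix.of_apply]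
    split_ifs <;> first | omega | simp_all
  rw [← Matrix.sub_mul, ← Matrix.mul_sub, hdiff, frobSq_orthogonal_mul_svdDiag_mul hU hV]
  simp only [ite_pow, ne_eq, OfNat.ofNat_ne_zero, not_false_eq_true, zero_pow,
    sum_ite, sum_const_zero, zero_add]
  congr 1
  ext t
  simp only [mem_filter, mem_range, mem_Ico]
  omega

end SVD

theorem svdDiagTrunc_mul_castLE {n d m k : ℕ} (h : m ≤ n) (σ : ℕ → ℝ)
    (M : Matrix (Fin d) (Fin k) ℝ) (i : Fin m) :
    (svdDiagTrunc n d m σ * M) (Fin.castLE h i) = (svdDiag m d σ * M) i := by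
  ext l
  simp only [Matrix.mul_apply, svdDiagTrunc, svdDiag, Matrix.of_apply, Fin.val_castLE, i.2,
    and_true]

theorem stmt4_general {n d j : ℕ} (A : Matrix (Fin n) (Fin d) ℝ)
    (U : Matrix (Fin n) (Fin n) ℝ) (V : Matrix (Fin d) (Fin d) ℝ) (σ : ℕ → ℝ)
    (hU : Uᵀ * U = 1) (hV : Vᵀ * V = 1)
    (hσ0 : ∀ i, i < min n d → 0 ≤ σ i)
    (hσa : ∀ i i', i ≤ i' → i' < min n d → σ i' ≤ σ i)
    (hA : A = U * svdDiag n d σ * Vᵀ)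
    (ε : ℝ) (hε : 0 < ε) (hj1 : 1 ≤ j)
    (m : ℕ) (hm : m = min n (min d (j + ⌈(j : ℝ) / ε⌉₊ - 1)))
    (S : Matrix (Fin m) (Fin d) ℝ)
    (hS : ∀ (i : Fin m) (l : Fin d),
      S i l = (svdDiagTrunc n d m σ * Vᵀ) (Fin.castLE (hm.le.trans (min_le_left _ _)) i) l) :
    ∀ L : Submodule ℝ (EuclideanSpace ℝ (Fin d)), Module.finrank ℝ L = j →
      matDistSq A (L : Set (EuclideanSpace ℝ (Fin d))) ≤
          matDistSq S (L : Set (EuclideanSpace ℝ (Fin d))) +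
            frobSq (A - U * svdDiagTrunc n d m σ * Vᵀ) ∧
        matDistSq S (L : Set (EuclideanSpace ℝ (Fin d))) +
            frobSq (A - U * svdDiagTrunc n d m σ * Vᵀ) ≤
          (1 + ε) * matDistSq A (L : Set (EuclideanSpace ℝ (Fin d))) := by
  intro L hL
  obtain ⟨w, hw, hw0, hw1, hwsum⟩ := exists_weights_of_orthogonal hV L
  have hmμ : m ≤ min n d := by omega
  have hS_eq : S = svdDiag m d σ * Vᵀ := by
    ext i l
    rw [hS, svdDiagTrunc_mul_castLE]
  rw [hS_eq, matDistSq_svdDiag_mul σ hw, min_eq_left (hmμ.trans (min_le_right _ _)), hA,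
    frobSq_svd_sub_svdDiagTrunc hU hV, Matrix.mul_assoc, matDistSq_orthogonal_mul hU,
    matDistSq_svdDiag_mul σ hw]
  refine sum_range_sq_mul_bounds hε hσ0 hσa hw0 hw1 hmμ (min_le_right n d)
    (hwsum.trans (by rw [hL])) fun hlt => ?_
  rw [show m = j + ⌈(j : ℝ) / ε⌉₊ - 1 by omega]
  exact le_and_le_mul_add_ceil_div_sub_one hε hj1

/-- coreset for the linear `j`-subspace problem:
with `A = U Σ Vᵀ` an SVD, `1 ≤ j ≤ d-1`, `ε > 0`, `m = min{n, d, j + ⌈j/ε⌉ - 1}`,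
`S` the matrix of the first `m` rows of `Σ^(m)Vᵀ` and `Δ = ‖A - A^(m)‖_F²`,
for every `j`-dimensional linear subspace `L` of `ℝ^d`:
`dist²(A,L) ≤ Σᵢ dist²(S_{i*},L) + Δ ≤ (1+ε)·dist²(A,L)`. -/
theorem stmt4 {n d j : ℕ} (A : Matrix (Fin n) (Fin d) ℝ)
    (U : Matrix (Fin n) (Fin n) ℝ) (V : Matrix (Fin d) (Fin d) ℝ) (σ : ℕ → ℝ)
    (hU : Uᵀ * U = 1) (hV : Vᵀ * V = 1)
    (hσ0 : ∀ i, i < min n d → 0 ≤ σ i)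
    (hσa : ∀ i i', i ≤ i' → i' < min n d → σ i' ≤ σ i)
    (hA : A = U * svdDiag n d σ * Vᵀ)
    (ε : ℝ) (hε : 0 < ε) (hj1 : 1 ≤ j) (hj2 : j < d)
    (m : ℕ) (hm : m = min n (min d (j + ⌈(j : ℝ) / ε⌉₊ - 1)))
    (S : Matrix (Fin m) (Fin d) ℝ)
    (hS : ∀ (i : Fin m) (l : Fin d),
      S i l = (svdDiagTrunc n d m σ * Vᵀ) (Fin.castLE (hm.le.trans (min_le_left _ _)) i) l) :
    ∀ L : Submodule ℝ (EuclideanSpace ℝ (Fin d)), Module.finrank ℝ L = j →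
      matDistSq A (L : Set (EuclideanSpace ℝ (Fin d))) ≤
          matDistSq S (L : Set (EuclideanSpace ℝ (Fin d))) +
            frobSq (A - U * svdDiagTrunc n d m σ * Vᵀ) ∧
        matDistSq S (L : Set (EuclideanSpace ℝ (Fin d))) +
            frobSq (A - U * svdDiagTrunc n d m σ * Vᵀ) ≤
          (1 + ε) * matDistSq A (L : Set (EuclideanSpace ℝ (Fin d))) :=
  stmt4_general A U V σ hU hV hσ0 hσa hA ε hε hj1 m hm S hS
end

section
/- Let ε > 0, let A, B ∈ ℝ^{n×d}, and let C ⊆ ℝ^d be an arbitrary nonempty set. Then |dist²(A,C) − dist²(B,C)| ≤ ε · dist²(A,C) + (1 + 1/ε) · ‖A − B‖_F². -/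
open Matrix

lemma rowDistSq_key {d : ℕ} (ε : ℝ) (hε : 0 < ε) (p q : Fin d → ℝ)
    (C : Set (EuclideanSpace ℝ (Fin d))) :
    |rowDistSq p C - rowDistSq q C| ≤
      ε * rowDistSq p C + (1 + 1 / ε) * ∑ j, (p j - q j) ^ 2 := by
  set dp := Metric.infDist (toEuc p) C with hdp
  set dq := Metric.infDist (toEuc q) C with hdq
  have hdp0 : 0 ≤ dp := Metric.infDist_nonneg
  have hdq0 : 0 ≤ dq := Metric.infDist_nonneg
  set δ := dist (toEuc p) (toEuc q) with hδ
  have hδ0 : 0 ≤ δ := dist_nonneg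
  have hlip : |dp - dq| ≤ δ := by
    have := (Metric.lipschitz_infDist_pt C).dist_le_mul (toEuc p) (toEuc q)
    simpa [Real.dist_eq] using this
  have hδsq : δ ^ 2 = ∑ j, (p j - q j) ^ 2 := by
    rw [hδ, EuclideanSpace.dist_eq, Real.sq_sqrt (by positivity)]
    refine Finset.sum_congr rfl fun j _ => ?_
    simp [toEuc, Real.dist_eq, sq_abs]
  have key : 2 * (δ * dp) ≤ ε * dp ^ 2 + (1 / ε) * δ ^ 2 := by
    rw [← sub_nonneg]
    have h : ε * dp ^ 2 + (1 / ε) * δ ^ 2 - 2 * (δ * dp) = (1 / ε) * (ε * dp - δ) ^ 2 := by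
      field_simp; ring
    rw [h]; positivity
  rw [rowDistSq, rowDistSq, ← hdp, ← hdq, ← hδsq]
  rcases le_or_gt dq dp with hc | hc
  · have hd : dp - dq ≤ δ := (le_abs_self _).trans hlip
    have hm : dp ^ 2 - dq ^ 2 ≤ 2 * (δ * dp) := by
      nlinarith [mul_le_mul_of_nonneg_right hd (by positivity : (0:ℝ) ≤ dp + dq),
        mul_nonneg hδ0 (sub_nonneg.2 hc)]
    have habs : |dp ^ 2 - dq ^ 2| = dp ^ 2 - dq ^ 2 :=
      abs_of_nonneg (by nlinarith)
    rw [habs]; nlinarith [sq_nonneg δ]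
  · have hd : dq - dp ≤ δ := (le_abs_self _).trans (abs_sub_comm dq dp ▸ hlip)
    have hm : dq ^ 2 - dp ^ 2 ≤ 2 * (δ * dp) + δ ^ 2 := by
      nlinarith [mul_le_mul_of_nonneg_right hd (by positivity : (0:ℝ) ≤ dq + dp),
        mul_le_mul_of_nonneg_left (by linarith : dq ≤ dp + δ) hδ0]
    have habs : |dp ^ 2 - dq ^ 2| = dq ^ 2 - dp ^ 2 := by
      rw [abs_sub_comm]; exact abs_of_nonneg (by nlinarith)
    rw [habs]; nlinarith [sq_nonneg δ]

/-- weak triangle inequality: for `ε > 0`, matrices `A, B ∈ ℝ^{n×d}`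
and any nonempty set `C ⊆ ℝ^d`:
`|dist²(A,C) - dist²(B,C)| ≤ ε·dist²(A,C) + (1 + 1/ε)·‖A-B‖_F²`. -/
theorem stmt8 {n d : ℕ} (ε : ℝ) (hε : 0 < ε)
    (A B : Matrix (Fin n) (Fin d) ℝ)
    (C : Set (EuclideanSpace ℝ (Fin d))) (hC : C.Nonempty) :
    |matDistSq A C - matDistSq B C| ≤ ε * matDistSq A C + (1 + 1 / ε) * frobSq (A - B) := by
  have key : ∀ i, |rowDistSq (A i) C - rowDistSq (B i) C| ≤
      ε * rowDistSq (A i) C + (1 + 1 / ε) * ∑ j, (A i j - B i j) ^ 2 := fun i =>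
    rowDistSq_key ε hε (A i) (B i) C
  calc |matDistSq A C - matDistSq B C|
      = |∑ i, (rowDistSq (A i) C - rowDistSq (B i) C)| := by
        rw [matDistSq, matDistSq, Finset.sum_sub_distrib]
    _ ≤ ∑ i, |rowDistSq (A i) C - rowDistSq (B i) C| := Finset.abs_sum_le_sum_abs _ _
    _ ≤ ∑ i, (ε * rowDistSq (A i) C + (1 + 1 / ε) * ∑ j, (A i j - B i j) ^ 2) :=
        Finset.sum_le_sum fun i _ => key i
    _ = ε * matDistSq A C + (1 + 1 / ε) * frobSq (A - B) := by
        rw [Finset.sum_add_distrib, matDistSq, frobSq, Finset.mul_sum, Finset.mul_sum]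
        simp [Matrix.sub_apply]
end

section
/- Let A ∈ ℝ^{n×d} have a singular value decomposition A = U Σ Vᵀ, let k ≥ 1 be an integer, let ε ∈ (0,1/3], let α ≥ 1, and set m = k + ⌈72k/ε²⌉ − 1; assume m ≤ min(n,d) − 1. Let C ⊆ ℝ^d be a set of k points such that dist²(A^(m),C) ≤ α · dist²(A^(m),C') for every set C' ⊆ ℝ^d of k points. Then dist²(A,C) ≤ α(1+ε) · dist²(A,C*) for every set C* ⊆ ℝ^d of k points; in particular C is an α(1+ε)-approximation for the k-means problem on A. -/
open Matrix

/-!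
Write `A = B + E` with `B = A^(m)` and `E = A - A^(m)`. The rows of `B` are orthogonal to the
rows of `E`, and `E` has spectral norm `σ m`, so the rows of `E` indexed by any set `S` sum to a
vector of squared norm at most `σ m ^ 2 * #S`. For an assignment of rows to centres the cost on
`A` is the cost on `B`, plus `‖E‖_F²`, minus twice a cross term. Grouping the cross term by
clusters and replacing each centre by its component orthogonal to the row space of `B` bounds it,
by AM-GM, by `k σ_m² / γ + γ · cost_B`. Conversely, a Courant–Fischer argument shows that any `k`
centres cost at least `(m + 1 - k) σ_m² ≥ 72 k σ_m² / ε²` on `A`, so for `γ = ε / 4` all error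
terms are small multiples of `ε` times the optimum.
-/

open Finset Module
open scoped RealInnerProductSpace

lemma two_mul_mul_le_div_add {X Y N s γ : ℝ} (hs : 0 ≤ s) (hN : 0 ≤ N) (hγ : 0 < γ)
    (hX : X ^ 2 ≤ s * N) : 2 * (X * Y) ≤ s / γ + γ * (N * Y ^ 2) := by
  have hprod : s / γ * (γ * (N * Y ^ 2)) = s * N * Y ^ 2 := by field_simp
  refine le_of_abs_le (abs_le_of_sq_le_sq ?_ (by positivity))
  nlinarith [sq_nonneg (s / γ - γ * (N * Y ^ 2)), mul_le_mul_of_nonneg_right hX (sq_nonneg Y)]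

lemma le_mul_one_add_of_cost_bounds {ε α cost opt fb fb' e2 D : ℝ} (hε0 : 0 < ε)
    (hε1 : ε ≤ 1 / 3) (hα : 1 ≤ α) (he2 : 0 ≤ e2) (hD : 0 ≤ D) (hopt0 : 0 ≤ opt)
    (hupper : cost ≤ (1 + ε / 4) * fb + e2 + D) (hfb : fb ≤ α * fb')
    (hlower : (1 - ε / 4) * fb' ≤ opt - e2 + D) (hDopt : 18 * D ≤ ε * opt) :
    cost ≤ α * (1 + ε) * opt := by
  have hα0 : 0 ≤ (1 + ε / 4) * α := by positivity
  have hα1 : 1 - ε / 4 ≤ (1 + ε / 4) * α := by nlinarith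
  refine le_of_mul_le_mul_left ?_ (by linarith : 0 < 1 - ε / 4)
  calc (1 - ε / 4) * cost ≤ (1 - ε / 4) * ((1 + ε / 4) * fb + e2 + D) := by
        gcongr; linarith
    _ ≤ (1 + ε / 4) * α * (opt - e2 + D) + (1 - ε / 4) * (e2 + D) := by
        nlinarith [mul_le_mul_of_nonneg_left hfb (by nlinarith : 0 ≤ (1 - ε / 4) * (1 + ε / 4)),
          mul_le_mul_of_nonneg_left hlower hα0]
    _ ≤ (1 + ε / 4) * α * (opt + 2 * D) := by
        nlinarith [mul_le_mul_of_nonneg_right hα1 he2, mul_le_mul_of_nonneg_right hα1 hD]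
    _ ≤ (1 - ε / 4) * (α * (1 + ε) * opt) := by
        nlinarith [mul_le_mul_of_nonneg_left hDopt hα0,
          mul_nonneg (mul_nonneg (by linarith : (0 : ℝ) ≤ α) hopt0) hε0.le]

section KMeans

variable {F : Type*} [NormedAddCommGroup F] {ι : Type*}

noncomputable def kmeansCost [Fintype ι] (a : ι → F) (C : Set F) : ℝ :=
  ∑ i, Metric.infDist (a i) C ^ 2

lemma kmeansCost_le_sum_norm_sub_sq [Fintype ι] (a : ι → F) {C : Set F} {g : ι → F}
    (hg : ∀ i, g i ∈ C) : kmeansCost a C ≤ ∑ i, ‖a i - g i‖ ^ 2 := by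
  refine sum_le_sum fun i _ => ?_
  rw [← dist_eq_norm]
  exact pow_le_pow_left₀ Metric.infDist_nonneg (Metric.infDist_le_dist_of_mem (hg i)) 2

lemma exists_kmeansCost_eq_sum_norm_sub_sq [Fintype ι] (a : ι → F) {C : Finset F}
    (hC : C.Nonempty) : ∃ g : ι → F, (∀ i, g i ∈ C) ∧ kmeansCost a C = ∑ i, ‖a i - g i‖ ^ 2 := by
  choose g hg hdist using fun i =>
    C.finite_toSet.isCompact.exists_infDist_eq_dist (C.coe_nonempty.mpr hC) (a i)
  exact ⟨g, hg, sum_congr rfl fun i _ => by rw [hdist, dist_eq_norm]⟩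

variable [InnerProductSpace ℝ F]

lemma norm_sub_starProjection_le (K : Submodule ℝ F) [K.HasOrthogonalProjection] (c : F)
    {y : F} (hy : y ∈ K) : ‖c - K.starProjection c‖ ≤ ‖c - y‖ := by
  rw [K.starProjection_minimal]
  exact ciInf_le ⟨0, Set.forall_mem_range.mpr fun _ => norm_nonneg _⟩ (⟨y, hy⟩ : K)

lemma two_mul_abs_inner_sum_le {K : Submodule ℝ F} [K.HasOrthogonalProjection] {b e : ι → F}
    (hb : ∀ i, b i ∈ K) (he : ∀ i, e i ∈ Kᗮ) {s γ : ℝ} (hs : 0 ≤ s) (hγ : 0 < γ) {S : Finset ι}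
    (hS : ‖∑ i ∈ S, e i‖ ^ 2 ≤ s * #S) (c : F) :
    2 * |⟪∑ i ∈ S, e i, c⟫| ≤ s / γ + γ * ∑ i ∈ S, ‖b i - c‖ ^ 2 := by
  set p := c - K.starProjection c
  have hcp : ⟪∑ i ∈ S, e i, c⟫ = ⟪∑ i ∈ S, e i, p⟫ := by
    rw [inner_sub_right, K.inner_left_of_mem_orthogonal (K.starProjection_apply_mem c)
      (K.orthogonal.sum_mem fun i _ => he i), sub_zero]
  have hp : #S * ‖p‖ ^ 2 ≤ ∑ i ∈ S, ‖b i - c‖ ^ 2 := by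
    rw [← nsmul_eq_mul, ← sum_const]
    gcongr with i
    rw [norm_sub_rev (b i)]
    exact norm_sub_starProjection_le K c (hb i)
  calc 2 * |⟪∑ i ∈ S, e i, c⟫| ≤ 2 * (‖∑ i ∈ S, e i‖ * ‖p‖) := by
        rw [hcp]; gcongr; exact abs_real_inner_le_norm _ _
    _ ≤ s / γ + γ * (#S * ‖p‖ ^ 2) := two_mul_mul_le_div_add hs (by positivity) hγ hS
    _ ≤ s / γ + γ * ∑ i ∈ S, ‖b i - c‖ ^ 2 := by gcongr

lemma two_mul_abs_sum_inner_le [Fintype ι] {K : Submodule ℝ F}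
    [K.HasOrthogonalProjection] {b e : ι → F} (hb : ∀ i, b i ∈ K) (he : ∀ i, e i ∈ Kᗮ)
    {s γ : ℝ} (hs : 0 ≤ s) (hγ : 0 < γ) (hS : ∀ S : Finset ι, ‖∑ i ∈ S, e i‖ ^ 2 ≤ s * #S)
    {C : Finset F} {g : ι → F} (hg : ∀ i, g i ∈ C) :
    2 * |∑ i, ⟪e i, g i⟫| ≤ #C * s / γ + γ * ∑ i, ‖b i - g i‖ ^ 2 := by
  classical
  have hfiber (f : ι → ℝ) : ∑ c ∈ C, ∑ i with g i = c, f i = ∑ i, f i :=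
    sum_fiberwise_of_maps_to (fun i _ => hg i) f
  calc 2 * |∑ i, ⟪e i, g i⟫|
      = 2 * |∑ c ∈ C, ⟪∑ i with g i = c, e i, c⟫| := by
        rw [← hfiber]
        congr 2
        refine sum_congr rfl fun c _ => ?_
        rw [sum_inner]
        exact sum_congr rfl fun i hi => by rw [(mem_filter.mp hi).2]
    _ ≤ ∑ c ∈ C, 2 * |⟪∑ i with g i = c, e i, c⟫| := by
        rw [← mul_sum]; gcongr; exact abs_sum_le_sum_abs _ _
    _ ≤ ∑ c ∈ C, (s / γ + γ * ∑ i with g i = c, ‖b i - c‖ ^ 2) :=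
        sum_le_sum fun c _ => two_mul_abs_inner_sum_le hb he hs hγ (hS _) c
    _ = #C * s / γ + γ * ∑ i, ‖b i - g i‖ ^ 2 := by
        rw [sum_add_distrib, sum_const, nsmul_eq_mul, ← mul_sum, ← hfiber, mul_div_assoc]
        congr 2
        refine sum_congr rfl fun c _ => sum_congr rfl fun i hi => ?_
        rw [(mem_filter.mp hi).2]

-- Courant–Fischer: `Z ⊓ Wᗮ` has dimension at least `dim Z - dim W`, and Bessel's inequality in an
-- orthonormal basis of it bounds each `‖a i - y i‖ ^ 2` from below.
lemma mul_finrank_sub_finrank_le_sum_norm_sub_sq [FiniteDimensional ℝ F] [Fintype ι]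
    (a : ι → F) {Z W : Submodule ℝ F} {μ : ℝ} (hμ : 0 ≤ μ)
    (hZ : ∀ x ∈ Z, μ * ‖x‖ ^ 2 ≤ ∑ i, ⟪a i, x⟫ ^ 2)
    {y : ι → F} (hy : ∀ i, y i ∈ W) :
    μ * ((finrank ℝ Z : ℝ) - finrank ℝ W) ≤ ∑ i, ‖a i - y i‖ ^ 2 := by
  have hdim : finrank ℝ Z ≤ finrank ℝ ↥(Z ⊓ Wᗮ) + finrank ℝ W := by
    have := Submodule.finrank_sup_add_finrank_inf_eq Z Wᗮ
    have := W.finrank_add_finrank_orthogonal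
    have := Submodule.finrank_le (Z ⊔ Wᗮ)
    omega
  set Y := Z ⊓ Wᗮ
  set u := stdOrthonormalBasis ℝ Y
  have hu : Orthonormal ℝ (Y.subtypeₗᵢ ∘ u) := u.orthonormal.comp_linearIsometry _
  have hbessel (i : ι) : ∑ q, ⟪(u q : F), a i⟫ ^ 2 ≤ ‖a i - y i‖ ^ 2 := by
    convert hu.sum_inner_products_le (a i - y i) (s := univ) using 2 with q
    simp only [Function.comp_apply, Submodule.coe_subtypeₗᵢ, Submodule.subtype_apply]
    rw [inner_sub_right, W.inner_left_of_mem_orthogonal (hy i) (u q).2.2, sub_zero,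
      Real.norm_eq_abs, sq_abs]
  calc μ * ((finrank ℝ Z : ℝ) - finrank ℝ W) ≤ ∑ q, μ * ‖(u q : F)‖ ^ 2 := by
        have hnorm (q) : ‖(u q : F)‖ = 1 := hu.1 q
        simp only [hnorm, one_pow, mul_one, sum_const, card_univ, Fintype.card_fin, nsmul_eq_mul]
        have : (finrank ℝ Z : ℝ) ≤ finrank ℝ Y + finrank ℝ W := by exact_mod_cast hdim
        nlinarith
    _ ≤ ∑ q, ∑ i, ⟪a i, u q⟫ ^ 2 := sum_le_sum fun q _ => hZ _ (u q).2.1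
    _ = ∑ i, ∑ q, ⟪(u q : F), a i⟫ ^ 2 := by
        rw [sum_comm]; simp only [real_inner_comm]
    _ ≤ ∑ i, ‖a i - y i‖ ^ 2 := sum_le_sum fun i _ => hbessel i

lemma mul_finrank_sub_card_le_kmeansCost [FiniteDimensional ℝ F] [Fintype ι] (a : ι → F)
    {Z : Submodule ℝ F} {μ : ℝ} (hμ : 0 ≤ μ) (hZ : ∀ x ∈ Z, μ * ‖x‖ ^ 2 ≤ ∑ i, ⟪a i, x⟫ ^ 2)
    {C : Finset F} (hC : C.Nonempty) : μ * ((finrank ℝ Z : ℝ) - #C) ≤ kmeansCost a C := by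
  obtain ⟨g, hg, hcost⟩ := exists_kmeansCost_eq_sum_norm_sub_sq a hC
  rw [hcost]
  refine le_trans ?_ (mul_finrank_sub_finrank_le_sum_norm_sub_sq a hμ hZ
    fun i => Submodule.subset_span (s := (C : Set F)) (hg i))
  gcongr
  exact_mod_cast finrank_span_finset_le_card C

lemma mem_orthogonal_span_range {b : ι → F} {x : F} (h : ∀ i, ⟪b i, x⟫ = 0) :
    x ∈ (Submodule.span ℝ (Set.range b))ᗮ := by
  rw [Submodule.mem_orthogonal]
  intro u hu
  induction hu using Submodule.span_induction with
  | mem _ hv => obtain ⟨i, rfl⟩ := hv; exact h i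
  | zero => exact inner_zero_left x
  | add _ _ _ _ hv hw => rw [inner_add_left, hv, hw, add_zero]
  | smul c _ _ hv => rw [real_inner_smul_left, hv, mul_zero]

lemma abs_sum_norm_add_sub_sq_sub_le [Fintype ι] {b e : ι → F} (horth : ∀ i j, ⟪b i, e j⟫ = 0)
    {s γ : ℝ} (hs0 : 0 ≤ s) (hγ : 0 < γ) (hs : ∀ S : Finset ι, ‖∑ i ∈ S, e i‖ ^ 2 ≤ s * #S)
    {C : Finset F} {g : ι → F} (hg : ∀ i, g i ∈ C) :
    |∑ i, ‖(b + e) i - g i‖ ^ 2 - (∑ i, ‖b i - g i‖ ^ 2 + ∑ i, ‖e i‖ ^ 2)|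
      ≤ #C * s / γ + γ * ∑ i, ‖b i - g i‖ ^ 2 := by
  set K := Submodule.span ℝ (Set.range b)
  have : FiniteDimensional ℝ K := FiniteDimensional.span_of_finite ℝ (Set.finite_range b)
  have hb (i : ι) : b i ∈ K := Submodule.subset_span ⟨i, rfl⟩
  have he (j : ι) : e j ∈ Kᗮ := mem_orthogonal_span_range fun i => horth i j
  have hsplit : ∑ i, ‖(b + e) i - g i‖ ^ 2 - (∑ i, ‖b i - g i‖ ^ 2 + ∑ i, ‖e i‖ ^ 2)
      = -(2 * ∑ i, ⟪e i, g i⟫) := by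
    rw [← sum_add_distrib, ← sum_sub_distrib, mul_sum, ← sum_neg_distrib]
    refine sum_congr rfl fun i _ => ?_
    rw [Pi.add_apply, add_sub_right_comm, norm_add_sq_real, inner_sub_left, horth,
      real_inner_comm]
    ring
  rw [hsplit, abs_neg, abs_mul, abs_two]
  exact two_mul_abs_sum_inner_le hb he hs0 hγ hs hg

theorem kmeansCost_add_le_of_kmeansCost_le [Fintype ι] {b e : ι → F}
    (horth : ∀ i j, ⟪b i, e j⟫ = 0) {s : ℝ} (hs0 : 0 ≤ s)
    (hs : ∀ S : Finset ι, ‖∑ i ∈ S, e i‖ ^ 2 ≤ s * #S)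
    {k : ℕ} {C C' : Finset F} (hC : C.Nonempty) (hCk : #C ≤ k) (hC' : C'.Nonempty)
    (hC'k : #C' ≤ k) {ε α : ℝ} (hε0 : 0 < ε) (hε1 : ε ≤ 1 / 3) (hα : 1 ≤ α)
    (happrox : kmeansCost b C ≤ α * kmeansCost b C')
    (hopt : 72 * k * s ≤ ε ^ 2 * kmeansCost (b + e) C') :
    kmeansCost (b + e) C ≤ α * (1 + ε) * kmeansCost (b + e) C' := by
  set D := k * s / (ε / 4) with hD_def
  have hcoreset {C'' : Finset F} (hk : #C'' ≤ k) {g : ι → F} (hg : ∀ i, g i ∈ C'') :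
      |∑ i, ‖(b + e) i - g i‖ ^ 2 - (∑ i, ‖b i - g i‖ ^ 2 + ∑ i, ‖e i‖ ^ 2)|
        ≤ D + ε / 4 * ∑ i, ‖b i - g i‖ ^ 2 := by
    have hCD : #C'' * s / (ε / 4) ≤ D := by rw [hD_def]; gcongr
    linarith [abs_sum_norm_add_sub_sq_sub_le horth hs0 (by positivity : 0 < ε / 4) hs hg]
  obtain ⟨g, hg, hcost⟩ := exists_kmeansCost_eq_sum_norm_sub_sq b hC
  obtain ⟨g', hg', hopt_eq⟩ := exists_kmeansCost_eq_sum_norm_sub_sq (b + e) hC'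
  set opt := kmeansCost (b + e) C'
  set fb := ∑ i, ‖b i - g i‖ ^ 2
  set fb' := ∑ i, ‖b i - g' i‖ ^ 2
  set e2 := ∑ i, ‖e i‖ ^ 2
  have hupper : kmeansCost (b + e) C ≤ (1 + ε / 4) * fb + e2 + D := by
    linarith [kmeansCost_le_sum_norm_sub_sq (b + e) hg, le_of_abs_le (hcoreset hCk hg)]
  have hlower : (1 - ε / 4) * fb' ≤ opt - e2 + D := by
    linarith [neg_le_of_abs_le (hcoreset hC'k hg')]
  have hfb : fb ≤ α * fb' := by
    rw [← hcost]
    exact happrox.trans (by gcongr; exact kmeansCost_le_sum_norm_sub_sq b hg')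
  -- `72 = 4 * 18`: the error term `D` is at most an `ε / 18` fraction of `opt`.
  have hDopt : 18 * D ≤ ε * opt := by
    have : 18 * D * ε = 72 * k * s := by rw [hD_def]; field_simp; ring
    nlinarith
  exact le_mul_one_add_of_cost_bounds hε0 hε1 hα (by positivity) (by positivity)
    (sum_nonneg fun _ _ => sq_nonneg _) hupper hfb hlower hDopt

end KMeans

section Matrices

variable {m n : Type*} [Fintype m] [Fintype n]

lemma mulVec_dotProduct_mulVec_self (P : Matrix m n ℝ) (x : n → ℝ) :
    (P *ᵥ x) ⬝ᵥ (P *ᵥ x) = x ⬝ᵥ ((Pᵀ * P) *ᵥ x) := by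
  rw [dotProduct_mulVec, ← mulVec_transpose, mulVec_mulVec, dotProduct_comm]

lemma dotProduct_mul_diagonal_mul_transpose_mulVec [DecidableEq n] (P : Matrix m n ℝ)
    (D : n → ℝ) (x : m → ℝ) :
    x ⬝ᵥ ((P * diagonal D * Pᵀ) *ᵥ x) = ∑ l, D l * (Pᵀ *ᵥ x) l ^ 2 := by
  rw [← mulVec_mulVec, ← mulVec_mulVec, dotProduct_mulVec, ← mulVec_transpose]
  simp only [dotProduct, mulVec_diagonal]
  exact sum_congr rfl fun l _ => by ring

lemma sum_transpose_mulVec_sq [DecidableEq m] [DecidableEq n] {P : Matrix m n ℝ}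
    (hP : P * Pᵀ = 1) (x : m → ℝ) :
    ∑ l, (Pᵀ *ᵥ x) l ^ 2 = x ⬝ᵥ x := by
  have := dotProduct_mul_diagonal_mul_transpose_mulVec P 1 x
  simpa [diagonal_one, hP] using this.symm

end Matrices

section Rows

variable {ι : Type*} {d : ℕ}

lemma inner_toEuc (x y : Fin d → ℝ) : ⟪toEuc x, toEuc y⟫ = x ⬝ᵥ y := by
  simp [toEuc, EuclideanSpace.inner_toLp_toLp, dotProduct_comm]

lemma inner_toEuc_row_toEuc_row (M N : Matrix ι (Fin d) ℝ) (i j : ι) :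
    ⟪toEuc (M i), toEuc (N j)⟫ = (M * Nᵀ) i j :=
  inner_toEuc _ _

lemma inner_toEuc_row (M : Matrix ι (Fin d) ℝ) (x : EuclideanSpace ℝ (Fin d)) (i : ι) :
    ⟪toEuc (M i), x⟫ = (M *ᵥ x.ofLp) i :=
  inner_toEuc _ _

lemma sum_inner_toEuc_row_sq [Fintype ι] (M : Matrix ι (Fin d) ℝ)
    (x : EuclideanSpace ℝ (Fin d)) :
    ∑ i, ⟪toEuc (M i), x⟫ ^ 2 = x.ofLp ⬝ᵥ ((Mᵀ * M) *ᵥ x.ofLp) := by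
  rw [← mulVec_dotProduct_mulVec_self]
  simp only [inner_toEuc_row, dotProduct, sq]

lemma orthonormal_toEuc_rows [DecidableEq ι] {P : Matrix ι (Fin d) ℝ} (hP : P * Pᵀ = 1) :
    Orthonormal ℝ fun i => toEuc (P i) :=
  orthonormal_iff_ite.mpr fun i j => by rw [inner_toEuc_row_toEuc_row, hP, one_apply]

lemma matDistSq_eq_kmeansCost {n : ℕ} (M : Matrix (Fin n) (Fin d) ℝ)
    (C : Set (EuclideanSpace ℝ (Fin d))) :
    matDistSq M C = kmeansCost (fun i => toEuc (M i)) C :=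
  rfl

lemma toEuc_add_rows (M N : Matrix ι (Fin d) ℝ) :
    (fun i => toEuc ((M + N) i)) = (fun i => toEuc (M i)) + fun i => toEuc (N i) :=
  rfl

lemma toEuc_vecMul [Fintype ι] (y : ι → ℝ) (M : Matrix ι (Fin d) ℝ) :
    toEuc (y ᵥ* M) = ∑ i, y i • toEuc (M i) := by
  ext j
  simp [toEuc, vecMul, dotProduct]

-- For `P = Vᵀ` these are the first `r` right singular vectors.
noncomputable def spanFirstRows (P : Matrix (Fin d) (Fin d) ℝ) {r : ℕ} (h : r ≤ d) :
    Submodule ℝ (EuclideanSpace ℝ (Fin d)) :=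
  Submodule.span ℝ (Set.range fun q : Fin r => toEuc (P (Fin.castLE h q)))

lemma finrank_spanFirstRows {P : Matrix (Fin d) (Fin d) ℝ} (hP : P * Pᵀ = 1) {r : ℕ}
    (h : r ≤ d) : finrank ℝ (spanFirstRows P h) = r :=
  (finrank_span_eq_card
    ((orthonormal_toEuc_rows hP).comp _ (Fin.castLE_injective h)).linearIndependent).trans
    (Fintype.card_fin r)

lemma mulVec_apply_eq_zero_of_mem_spanFirstRows {P : Matrix (Fin d) (Fin d) ℝ}
    (hP : P * Pᵀ = 1) {r : ℕ} (h : r ≤ d) {x : EuclideanSpace ℝ (Fin d)}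
    (hx : x ∈ spanFirstRows P h) {l : Fin d} (hl : r ≤ l) : (P *ᵥ x.ofLp) l = 0 := by
  rw [← inner_toEuc_row]
  refine Submodule.inner_left_of_mem_orthogonal hx (mem_orthogonal_span_range fun q => ?_)
  refine (orthonormal_toEuc_rows hP).2 fun hq => ?_
  rw [Fin.ext_iff, Fin.val_castLE] at hq
  omega

end Rows

section SVD

variable {n d : ℕ}

lemma transpose_svdDiag (τ : ℕ → ℝ) : (svdDiag n d τ)ᵀ = svdDiag d n τ := by
  ext i j
  simp only [transpose_apply, svdDiag, of_apply, eq_comm (a := (j : ℕ))]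
  split_ifs with h <;> simp [h]

lemma svdDiagTrunc_eq_svdDiag (m : ℕ) (σ : ℕ → ℝ) :
    svdDiagTrunc n d m σ = svdDiag n d fun t => if t < m then σ t else 0 := by
  ext i j
  simp only [svdDiagTrunc, svdDiag, of_apply]
  split_ifs <;> tauto

lemma svdDiag_add (τ τ' : ℕ → ℝ) : svdDiag n d τ + svdDiag n d τ' = svdDiag n d (τ + τ') := by
  ext i j
  simp only [svdDiag, Matrix.add_apply, of_apply, Pi.add_apply]
  split_ifs <;> simp

lemma svdDiag_mul_transpose_svdDiag (τ τ' : ℕ → ℝ) :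
    svdDiag n d τ * (svdDiag n d τ')ᵀ
      = diagonal fun t : Fin n => if (t : ℕ) < d then τ t * τ' t else 0 := by
  ext i j
  rw [mul_apply, diagonal_apply]
  simp only [transpose_apply, svdDiag, of_apply]
  rw [Fin.sum_univ_eq_sum_range
    (fun l => (if (i : ℕ) = l then τ i else 0) * (if (j : ℕ) = l then τ' j else 0)) d]
  simp only [ite_mul, zero_mul, sum_ite_eq, mem_range]
  split_ifs <;> simp_all [Fin.ext_iff]

variable {U : Matrix (Fin n) (Fin n) ℝ} {V : Matrix (Fin d) (Fin d) ℝ}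

lemma transpose_svd (τ : ℕ → ℝ) : (U * svdDiag n d τ * Vᵀ)ᵀ = V * svdDiag d n τ * Uᵀ := by
  rw [transpose_mul, transpose_mul, transpose_transpose, transpose_svdDiag, Matrix.mul_assoc]

lemma svd_mul_transpose_svd (hV : Vᵀ * V = 1) (τ τ' : ℕ → ℝ) :
    U * svdDiag n d τ * Vᵀ * (U * svdDiag n d τ' * Vᵀ)ᵀ
      = U * (diagonal fun t : Fin n => if (t : ℕ) < d then τ t * τ' t else 0) * Uᵀ := by
  rw [transpose_svd, ← svdDiag_mul_transpose_svdDiag, transpose_svdDiag]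
  simp only [Matrix.mul_assoc]
  rw [← Matrix.mul_assoc Vᵀ, hV, Matrix.one_mul]

lemma svd_transpose_mul_svd (hU : Uᵀ * U = 1) (τ : ℕ → ℝ) :
    (U * svdDiag n d τ * Vᵀ)ᵀ * (U * svdDiag n d τ * Vᵀ)
      = V * (diagonal fun l : Fin d => if (l : ℕ) < n then τ l * τ l else 0) * Vᵀ := by
  conv_lhs => rw [← transpose_transpose (U * svdDiag n d τ * Vᵀ), transpose_svd]
  exact svd_mul_transpose_svd hU τ τ

lemma inner_svd_rows_eq_zero (hV : Vᵀ * V = 1) {τ τ' : ℕ → ℝ} (h : ∀ t, τ t * τ' t = 0)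
    (i j : Fin n) :
    ⟪toEuc ((U * svdDiag n d τ * Vᵀ) i), toEuc ((U * svdDiag n d τ' * Vᵀ) j)⟫ = 0 := by
  rw [inner_toEuc_row_toEuc_row, svd_mul_transpose_svd hV]
  simp [h]

lemma norm_sum_svd_row_sq_le (hU : Uᵀ * U = 1) (hV : Vᵀ * V = 1) {τ : ℕ → ℝ} {μ : ℝ}
    (hμ : 0 ≤ μ) (hτ : ∀ t < min n d, τ t ^ 2 ≤ μ) (S : Finset (Fin n)) :
    ‖∑ i ∈ S, toEuc ((U * svdDiag n d τ * Vᵀ) i)‖ ^ 2 ≤ μ * #S := by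
  set M := U * svdDiag n d τ * Vᵀ
  set y : Fin n → ℝ := fun i => if i ∈ S then 1 else 0
  have hsum : ∑ i ∈ S, toEuc (M i) = toEuc (Mᵀ *ᵥ y) := by
    rw [mulVec_transpose, toEuc_vecMul]
    simp [y, ite_smul]
  rw [hsum, ← real_inner_self_eq_norm_sq, inner_toEuc, mulVec_dotProduct_mulVec_self,
    transpose_transpose, svd_mul_transpose_svd hV, dotProduct_mul_diagonal_mul_transpose_mulVec]
  calc ∑ t : Fin n, (if (t : ℕ) < d then τ t * τ t else 0) * (Uᵀ *ᵥ y) t ^ 2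
      ≤ ∑ t, μ * (Uᵀ *ᵥ y) t ^ 2 := by
        gcongr with t
        split_ifs with ht
        · rw [← sq]; exact hτ t (lt_min t.isLt ht)
        · exact hμ
    _ = μ * #S := by
        rw [← mul_sum, sum_transpose_mulVec_sq (mul_eq_one_comm.mp hU)]
        simp [y, dotProduct]

lemma sq_mul_norm_sq_le_sum_inner_svd_row_sq (hU : Uᵀ * U = 1) (hV : Vᵀ * V = 1) {σ : ℕ → ℝ}
    (hσ0 : ∀ i, i < min n d → 0 ≤ σ i) (hσa : ∀ i i', i ≤ i' → i' < min n d → σ i' ≤ σ i)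
    {m : ℕ} (hm : m + 1 ≤ min n d) {x : EuclideanSpace ℝ (Fin d)}
    (hx : x ∈ spanFirstRows Vᵀ (hm.trans (min_le_right n d))) :
    σ m ^ 2 * ‖x‖ ^ 2 ≤ ∑ i, ⟪toEuc ((U * svdDiag n d σ * Vᵀ) i), x⟫ ^ 2 := by
  have hVVt : Vᵀ * Vᵀᵀ = 1 := by rwa [transpose_transpose]
  have hnorm : ‖x‖ ^ 2 = ∑ l, (Vᵀ *ᵥ x.ofLp) l ^ 2 := by
    rw [sum_transpose_mulVec_sq (mul_eq_one_comm.mp hV), ← real_inner_self_eq_norm_sq]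
    exact inner_toEuc _ _
  rw [sum_inner_toEuc_row_sq, svd_transpose_mul_svd hU,
    dotProduct_mul_diagonal_mul_transpose_mulVec, hnorm, mul_sum]
  refine sum_le_sum fun l _ => ?_
  by_cases hl : (l : ℕ) ≤ m
  · rw [if_pos (by omega), ← sq]
    gcongr
    · exact hσ0 m (by omega)
    · exact hσa l m hl (by omega)
  · rw [mulVec_apply_eq_zero_of_mem_spanFirstRows hVVt _ hx (by omega)]
    simp

lemma sq_mul_sub_card_le_matDistSq (hU : Uᵀ * U = 1) (hV : Vᵀ * V = 1) {σ : ℕ → ℝ}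
    (hσ0 : ∀ i, i < min n d → 0 ≤ σ i) (hσa : ∀ i i', i ≤ i' → i' < min n d → σ i' ≤ σ i)
    {m : ℕ} (hm : m + 1 ≤ min n d) {C : Finset (EuclideanSpace ℝ (Fin d))} (hC : C.Nonempty) :
    σ m ^ 2 * ((m : ℝ) + 1 - #C) ≤ matDistSq (U * svdDiag n d σ * Vᵀ) C := by
  have := mul_finrank_sub_card_le_kmeansCost _ (sq_nonneg (σ m))
    (fun x hx => sq_mul_norm_sq_le_sum_inner_svd_row_sq hU hV hσ0 hσa hm hx) hC
  rw [finrank_spanFirstRows (by rwa [transpose_transpose])] at this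
  exact_mod_cast this

end SVD

/-- dimensionality reduction for `k`-means: with `A = U Σ Vᵀ` an SVD,
`k ≥ 1`, `ε ∈ (0,1/3]`, `α ≥ 1`, `m = k + ⌈72k/ε²⌉ - 1 ≤ min(n,d) - 1`, if the set `C` of
`k` points is an α-approximation for `k`-means on `A^(m)`, then it is an
`α(1+ε)`-approximation for `k`-means on `A`. -/
theorem stmt10 {n d : ℕ} (A : Matrix (Fin n) (Fin d) ℝ)
    (U : Matrix (Fin n) (Fin n) ℝ) (V : Matrix (Fin d) (Fin d) ℝ) (σ : ℕ → ℝ)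
    (hU : Uᵀ * U = 1) (hV : Vᵀ * V = 1)
    (hσ0 : ∀ i, i < min n d → 0 ≤ σ i)
    (hσa : ∀ i i', i ≤ i' → i' < min n d → σ i' ≤ σ i)
    (hA : A = U * svdDiag n d σ * Vᵀ)
    (k : ℕ) (hk : 1 ≤ k)
    (ε : ℝ) (hε0 : 0 < ε) (hε1 : ε ≤ 1 / 3)
    (α : ℝ) (hα : 1 ≤ α)
    (m : ℕ) (hm : m = k + ⌈(72 * k : ℝ) / ε ^ 2⌉₊ - 1) (hm2 : m + 1 ≤ min n d)
    (C : Finset (EuclideanSpace ℝ (Fin d))) (hC : C.card = k)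
    (happrox : ∀ C' : Finset (EuclideanSpace ℝ (Fin d)), C'.card = k →
      matDistSq (U * svdDiagTrunc n d m σ * Vᵀ) (C : Set (EuclideanSpace ℝ (Fin d))) ≤
        α * matDistSq (U * svdDiagTrunc n d m σ * Vᵀ) (C' : Set (EuclideanSpace ℝ (Fin d)))) :
    ∀ Cstar : Finset (EuclideanSpace ℝ (Fin d)), Cstar.card = k →
      matDistSq A (C : Set (EuclideanSpace ℝ (Fin d))) ≤
        α * (1 + ε) * matDistSq A (Cstar : Set (EuclideanSpace ℝ (Fin d))) := by
  intro Cstar hCstar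
  set low : ℕ → ℝ := fun t => if t < m then σ t else 0
  set high : ℕ → ℝ := fun t => if t < m then 0 else σ t
  have hA' : A = U * svdDiag n d low * Vᵀ + U * svdDiag n d high * Vᵀ := by
    rw [hA, ← Matrix.add_mul, ← Matrix.mul_add, svdDiag_add]
    congr
    funext t
    by_cases ht : t < m <;> simp [low, high, ht]
  have hCstarne : Cstar.Nonempty := card_pos.mp (by omega)
  have hceil : (72 * k : ℝ) / ε ^ 2 ≤ (m : ℝ) + 1 - k := by
    have hm' : (k : ℝ) + ⌈(72 * k : ℝ) / ε ^ 2⌉₊ = m + 1 := by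
      exact_mod_cast (by omega : k + ⌈(72 * k : ℝ) / ε ^ 2⌉₊ = m + 1)
    linarith [Nat.le_ceil ((72 * k : ℝ) / ε ^ 2)]
  have hopt := sq_mul_sub_card_le_matDistSq hU hV hσ0 hσa hm2 hCstarne
  rw [← hA, hA', hCstar] at hopt
  rw [svdDiagTrunc_eq_svdDiag] at happrox
  rw [hA']
  simp only [matDistSq_eq_kmeansCost, toEuc_add_rows] at happrox hopt ⊢
  refine kmeansCost_add_le_of_kmeansCost_le (inner_svd_rows_eq_zero hV fun t => ?_)
    (sq_nonneg (σ m)) (norm_sum_svd_row_sq_le hU hV (sq_nonneg (σ m)) fun t ht => ?_)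
    (card_pos.mp (by omega)) hC.le hCstarne hCstar.le hε0 hε1 hα (happrox Cstar hCstar) ?_
  · by_cases ht : t < m <;> simp [low, high, ht]
  · by_cases htm : t < m
    · simpa [high, htm] using sq_nonneg (σ m)
    · simp only [high, if_neg htm]
      exact pow_le_pow_left₀ (hσ0 t ht) (hσa m t (not_lt.mp htm) ht) 2
  · calc 72 * k * σ m ^ 2 = ε ^ 2 * (σ m ^ 2 * ((72 * k : ℝ) / ε ^ 2)) := by field_simp
      _ ≤ ε ^ 2 * (σ m ^ 2 * ((m : ℝ) + 1 - k)) := by gcongr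
      _ ≤ _ := by gcongr
end

section
/- Let S be an r-dimensional linear subspace of ℝ^d, let L be an (r+j)-dimensional linear subspace of ℝ^d that contains S, and let V be a j-dimensional linear subspace of ℝ^d. Then there exists an orthogonal matrix U ∈ ℝ^{d×d} such that Ux = x for every x ∈ S and Uc ∈ L for every c ∈ V. -/
/-!
Split `ℝ^d = S ⊕ Sᗮ`. Since `S ≤ L`, the space `L ⊓ Sᗮ` has dimension `j`, so the projection of
`V` onto `Sᗮ`, of dimension at most `j`, is carried into `L ⊓ Sᗮ` by some isometry `g` of `Sᗮ`.
Then `U := P_S + g ∘ P_Sᗮ` is an isometry fixing `S`, and `U c ∈ S + (L ⊓ Sᗮ) ≤ L` for `c ∈ V`.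
-/

open Matrix Module

namespace LinearIsometry

variable {𝕜 E : Type*} [RCLike 𝕜] [NormedAddCommGroup E] [InnerProductSpace 𝕜 E]

noncomputable def extendById {S : Submodule 𝕜 E} [S.HasOrthogonalProjection] (g : Sᗮ →ₗᵢ[𝕜] Sᗮ) :
    E →ₗᵢ[𝕜] E where
  toLinearMap := S.starProjection.toLinearMap +
    Sᗮ.subtype ∘ₗ g.toLinearMap ∘ₗ Sᗮ.orthogonalProjectionOnto.toLinearMap
  norm_map' x := by
    have hperp : inner 𝕜 (S.starProjection x) (g (Sᗮ.orthogonalProjectionOnto x) : E) = 0 :=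
      Submodule.inner_right_of_mem_orthogonal (S.orthogonalProjectionOnto x).2
        (g (Sᗮ.orthogonalProjectionOnto x)).2
    rw [← sq_eq_sq₀ (norm_nonneg _) (norm_nonneg _), S.norm_sq_eq_add_norm_sq_projection x]
    simp only [LinearMap.add_apply, LinearMap.comp_apply, ContinuousLinearMap.coe_coe,
      Submodule.coe_subtype, coe_toLinearMap, sq]
    rw [norm_add_sq_eq_norm_sq_add_norm_sq_of_inner_eq_zero _ _ hperp, Submodule.norm_coe,
      g.norm_map]
    rfl

variable {S : Submodule 𝕜 E} [S.HasOrthogonalProjection] (g : Sᗮ →ₗᵢ[𝕜] Sᗮ)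

theorem extendById_apply (x : E) :
    g.extendById x = S.starProjection x + g (Sᗮ.orthogonalProjectionOnto x) := rfl

theorem extendById_apply_of_mem {x : E} (hx : x ∈ S) : g.extendById x = x := by
  rw [extendById_apply, Submodule.starProjection_eq_self_iff.mpr hx,
    Submodule.orthogonalProjectionOnto_apply_of_mem_orthogonal
      (Submodule.le_orthogonal_orthogonal S hx), map_zero, Submodule.coe_zero, add_zero]

end LinearIsometry

section FiniteDimensional

variable {𝕜 E : Type*} [RCLike 𝕜] [NormedAddCommGroup E] [InnerProductSpace 𝕜 E]
  [FiniteDimensional 𝕜 E]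

theorem Submodule.exists_linearIsometry_mapsTo_of_finrank_le {A B : Submodule 𝕜 E}
    (h : finrank 𝕜 A ≤ finrank 𝕜 B) : ∃ U : E →ₗᵢ[𝕜] E, ∀ a ∈ A, U a ∈ B := by
  let bA := stdOrthonormalBasis 𝕜 A
  let bB := stdOrthonormalBasis 𝕜 B
  let w : Fin (finrank 𝕜 A) → B := fun i => bB (Fin.castLE h i)
  have hw : Orthonormal 𝕜 w := bB.orthonormal.comp _ (Fin.castLE_injective h)
  have hφ : (bA.toBasis.constr 𝕜 w) ∘ bA.toBasis = w := funext (bA.toBasis.constr_basis 𝕜 w)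
  let φ : A →ₗᵢ[𝕜] B := (bA.toBasis.constr 𝕜 w).isometryOfOrthonormal
    (v := bA.toBasis) (by simp) (hφ.symm ▸ hw)
  refine ⟨(B.subtypeₗᵢ.comp φ).extend, fun a ha => ?_⟩
  rw [show a = ((⟨a, ha⟩ : A) : E) from rfl, LinearIsometry.extend_apply]
  exact (φ ⟨a, ha⟩).2

theorem Submodule.exists_linearIsometry_fixing_mapsTo {S L V : Submodule 𝕜 E} (hSL : S ≤ L)
    (hdim : finrank 𝕜 V + finrank 𝕜 S ≤ finrank 𝕜 L) :
    ∃ U : E →ₗᵢ[𝕜] E, (∀ x ∈ S, U x = x) ∧ ∀ c ∈ V, U c ∈ L := by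
  have hrank : finrank 𝕜 (V.map Sᗮ.orthogonalProjectionOnto.toLinearMap) ≤
      finrank 𝕜 ((Sᗮ ⊓ L).comap Sᗮ.subtype) := by
    rw [(comapSubtypeEquivOfLe inf_le_left).finrank_eq]
    have := finrank_add_inf_finrank_orthogonal hSL
    have := finrank_map_le Sᗮ.orthogonalProjectionOnto.toLinearMap V
    omega
  obtain ⟨g, hg⟩ := exists_linearIsometry_mapsTo_of_finrank_le hrank
  refine ⟨g.extendById, fun x hx => g.extendById_apply_of_mem hx, fun c hc => ?_⟩
  rw [g.extendById_apply]
  exact L.add_mem (hSL (S.orthogonalProjectionOnto c).2) (hg _ (mem_map_of_mem hc)).2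

end FiniteDimensional

theorem LinearIsometry.exists_mem_unitaryGroup_mulVec_eq {𝕜 n : Type*} [RCLike 𝕜] [Fintype n]
    [DecidableEq n] (f : EuclideanSpace 𝕜 n →ₗᵢ[𝕜] EuclideanSpace 𝕜 n) :
    ∃ U ∈ unitaryGroup n 𝕜, ∀ x : n → 𝕜, U *ᵥ x = (f (WithLp.toLp 2 x)).ofLp := by
  let e := toEuclideanCLM (𝕜 := 𝕜) (n := n)
  let F := f.toContinuousLinearMap
  refine ⟨e.symm F, ?_, fun x => ?_⟩
  · have hstar : star (e.symm F) = e.symm (star F) := (e.symm.map_star' F).symm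
    rw [mem_unitaryGroup_iff', hstar, ← map_mul, ContinuousLinearMap.star_eq_adjoint,
      ContinuousLinearMap.mul_def,
      (ContinuousLinearMap.norm_map_iff_adjoint_comp_self _).mp f.norm_map, map_one]
  · rw [← ofLp_toEuclideanCLM, StarAlgEquiv.apply_symm_apply]
    rfl

/-- rotation lemma: given an `r`-dimensional subspace `S ⊆ ℝ^d`, an
`(r+j)`-dimensional subspace `L ⊇ S`, and a `j`-dimensional subspace `V`, there is an
orthogonal matrix `U ∈ ℝ^{d×d}` with `Ux = x` for all `x ∈ S` and `Uc ∈ L` for all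
`c ∈ V`. -/
theorem stmt12 {d r j : ℕ}
    (S L V : Submodule ℝ (Fin d → ℝ))
    (hS : Module.finrank ℝ S = r) (hL : Module.finrank ℝ L = r + j)
    (hSL : S ≤ L) (hV : Module.finrank ℝ V = j) :
    ∃ U : Matrix (Fin d) (Fin d) ℝ, Uᵀ * U = 1 ∧
      (∀ x ∈ S, U.mulVec x = x) ∧ (∀ c ∈ V, U.mulVec c ∈ L) := by
  let e := (WithLp.linearEquiv 2 ℝ (Fin d → ℝ)).symm
  let toEuclidean (P : Submodule ℝ (Fin d → ℝ)) := P.map (e : _ →ₗ[ℝ] EuclideanSpace ℝ (Fin d))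
  have hdim : finrank ℝ (toEuclidean V) + finrank ℝ (toEuclidean S) ≤
      finrank ℝ (toEuclidean L) := by
    rw [e.finrank_map_eq, e.finrank_map_eq, e.finrank_map_eq, hS, hL, hV, add_comm]
  obtain ⟨f, hfix, hmaps⟩ :=
    Submodule.exists_linearIsometry_fixing_mapsTo (Submodule.map_mono hSL) hdim
  obtain ⟨U, hU, hUf⟩ := f.exists_mem_unitaryGroup_mulVec_eq
  refine ⟨U, ?_, fun x hx => ?_, fun c hc => ?_⟩
  · simpa [star_eq_conjTranspose] using mem_unitaryGroup_iff'.mp hU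
  · rw [hUf]
    exact congrArg WithLp.ofLp (hfix _ (Submodule.mem_map_of_mem hx))
  · rw [hUf]
    exact (Submodule.mem_map_equiv L).mp (hmaps _ (Submodule.mem_map_of_mem hc))
end

section
/- Let ε ∈ (0,1/2], let A ∈ ℝ^{n×d}, let 𝒞 be a nonempty set of nonempty subsets of ℝ^d, and suppose S ∈ ℝ^{r×d}, nonnegative weights w ∈ ℝ^r and Δ ≥ 0 satisfy, for every C' ∈ 𝒞, |Σ_{i=1}^r w_i·dist²(S_{i*},C') + Δ − dist²(A,C')| ≤ ε·dist²(A,C'). Let α ≥ 1 and let C ∈ 𝒞 satisfy Σ_{i=1}^r w_i·dist²(S_{i*},C) ≤ α·Σ_{i=1}^r w_i·dist²(S_{i*},C') for every C' ∈ 𝒞. Then for every C* ∈ 𝒞, dist²(A,C) ≤ (α(1+ε)/(1−ε))·dist²(A,C*). -/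
open Matrix

/-- approximation via coresets: if `(S, Δ, w)` is an `ε`-coreset of `A`
for queries from `𝒞` and `C ∈ 𝒞` is an `α`-approximation of the optimal clustering of the
coreset, then `C` is an `α(1+ε)/(1-ε)`-approximation for `A`. -/
theorem stmt15 {n d r : ℕ} (ε : ℝ) (hε0 : 0 < ε) (hε1 : ε ≤ 1 / 2)
    (A : Matrix (Fin n) (Fin d) ℝ)
    (𝒞 : Set (Set (EuclideanSpace ℝ (Fin d)))) (h𝒞ne : 𝒞.Nonempty)
    (h𝒞mem : ∀ C ∈ 𝒞, C.Nonempty)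
    (S : Matrix (Fin r) (Fin d) ℝ) (w : Fin r → ℝ) (hw : ∀ i, 0 ≤ w i)
    (Δ : ℝ) (hΔ : 0 ≤ Δ)
    (hcore : ∀ C' ∈ 𝒞,
      |(∑ i, w i * rowDistSq (S i) C') + Δ - matDistSq A C'| ≤ ε * matDistSq A C')
    (α : ℝ) (hα : 1 ≤ α)
    (C : Set (EuclideanSpace ℝ (Fin d))) (hC : C ∈ 𝒞)
    (happrox : ∀ C' ∈ 𝒞,
      (∑ i, w i * rowDistSq (S i) C) ≤ α * ∑ i, w i * rowDistSq (S i) C') :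
    ∀ Cstar ∈ 𝒞, matDistSq A C ≤ α * (1 + ε) / (1 - ε) * matDistSq A Cstar := by
  intro Cstar hCs
  have h1 := abs_le.mp (hcore C hC)
  have h2 := abs_le.mp (hcore Cstar hCs)
  have h3 := happrox Cstar hCs
  have hM : 0 ≤ matDistSq A Cstar := Finset.sum_nonneg fun i _ => sq_nonneg _
  have hε : (0:ℝ) < 1 - ε := by linarith
  rw [div_mul_eq_mul_div, le_div_iff₀ hε]
  nlinarith [mul_le_mul_of_nonneg_left h2.2 (by linarith : (0:ℝ) ≤ α)]
end

section
/- Let A, A' ∈ ℝ^{n×d}, let w₁,…,wₙ ≥ 1 be weights, let k ≥ 1 and j ≥ 0 be integers, and let 𝒬 be the family of all subsets of ℝ^d that are unions of k affine j-dimensional subspaces. Let opt = inf_{C ∈ 𝒬} dist²_w(A,C) and assume opt > 0 and Σ_{i=1}^n w_i·‖A_{i*} − A'_{i*}‖₂² ≤ α·opt for some α ≥ 0. Then for every i ∈ {1,…,n} and every C ∈ 𝒬 with dist²_w(A,C) > 0 and dist²_w(A',C) > 0, (w_i·dist²(A_{i*},C))/dist²_w(A,C) ≤ (4+4α)·( (w_i·dist²(A'_{i*},C))/dist²_w(A',C)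 + (w_i·‖A_{i*} − A'_{i*}‖₂²)/opt ). -/
open Matrix

/-- `C` is an affine `j`-dimensional subspace of `ℝ^d`. -/
def IsAffineSub (d j : ℕ) (C : Set (EuclideanSpace ℝ (Fin d))) : Prop :=
  ∃ (p : EuclideanSpace ℝ (Fin d)) (L : Submodule ℝ (EuclideanSpace ℝ (Fin d))),
    Module.finrank ℝ L = j ∧ C = (fun x => p + x) '' (L : Set (EuclideanSpace ℝ (Fin d)))

/-- `C` is a union of `k` affine `j`-dimensional subspaces of `ℝ^d`. -/
def IsKAffineUnion (d j k : ℕ) (C : Set (EuclideanSpace ℝ (Fin d))) : Prop :=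
  ∃ f : Fin k → Set (EuclideanSpace ℝ (Fin d)),
    (∀ i, IsAffineSub d j (f i)) ∧ C = ⋃ i, f i

lemma rowDistSq_move {d : ℕ} (u v : Fin d → ℝ) (C : Set (EuclideanSpace ℝ (Fin d))) :
    rowDistSq u C ≤ 2 * rowDistSq v C + 2 * ∑ l, (u l - v l) ^ 2 := by
  have hD2 : (dist (toEuc u) (toEuc v)) ^ 2 = ∑ l, (u l - v l) ^ 2 := by
    rw [EuclideanSpace.dist_eq, Real.sq_sqrt (Finset.sum_nonneg fun l _ => sq_nonneg _)]
    refine Finset.sum_congr rfl fun l _ => ?_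
    rw [Real.dist_eq, sq_abs]
    simp [toEuc]
  have htri : Metric.infDist (toEuc u) C ≤
      Metric.infDist (toEuc v) C + dist (toEuc u) (toEuc v) :=
    Metric.infDist_le_infDist_add_dist
  have h1 := Metric.infDist_nonneg (s := C) (x := toEuc u)
  have h2 := Metric.infDist_nonneg (s := C) (x := toEuc v)
  have h3 := dist_nonneg (x := toEuc u) (y := toEuc v)
  unfold rowDistSq
  nlinarith [sq_nonneg (dist (toEuc u) (toEuc v) - Metric.infDist (toEuc v) C)]

/-- sensitivity bound via a movement argument: let `𝒬` be the family of
unions of `k` affine `j`-dimensional subspaces, `opt = inf_{C∈𝒬} dist²_w(A,C) > 0`, and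
suppose `Σᵢ wᵢ·‖A_{i*} - A'_{i*}‖² ≤ α·opt`.  Then for every `i` and every `C ∈ 𝒬` with
`dist²_w(A,C) > 0` and `dist²_w(A',C) > 0`,
`wᵢ·dist²(A_{i*},C)/dist²_w(A,C) ≤ (4+4α)·(wᵢ·dist²(A'_{i*},C)/dist²_w(A',C)
+ wᵢ·‖A_{i*} - A'_{i*}‖²/opt)`. -/
theorem stmt17 {n d : ℕ} (k j : ℕ) (hk : 1 ≤ k)
    (A A' : Matrix (Fin n) (Fin d) ℝ) (w : Fin n → ℝ) (hw : ∀ i, 1 ≤ w i)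
    (opt : ℝ)
    (hopt : opt = sInf {x : ℝ | ∃ C : Set (EuclideanSpace ℝ (Fin d)),
      IsKAffineUnion d j k C ∧ x = ∑ i, w i * rowDistSq (A i) C})
    (hopt_pos : 0 < opt)
    (α : ℝ) (hα : 0 ≤ α)
    (hmove : (∑ i, w i * ∑ l, (A i l - A' i l) ^ 2) ≤ α * opt) :
    ∀ (i : Fin n) (C : Set (EuclideanSpace ℝ (Fin d))), IsKAffineUnion d j k C →
      0 < (∑ i', w i' * rowDistSq (A i') C) →
      0 < (∑ i', w i' * rowDistSq (A' i') C) →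
      w i * rowDistSq (A i) C / (∑ i', w i' * rowDistSq (A i') C) ≤
        (4 + 4 * α) *
          (w i * rowDistSq (A' i) C / (∑ i', w i' * rowDistSq (A' i') C) +
            w i * (∑ l, (A i l - A' i l) ^ 2) / opt) := by
  intro i C hC hS hS'
  obtain ⟨f, hf, hCeq⟩ := hC
  set S := ∑ i', w i' * rowDistSq (A i') C with hSdef
  set S' := ∑ i', w i' * rowDistSq (A' i') C with hS'def
  have hwnn : ∀ i', (0:ℝ) ≤ w i' := fun i' => le_trans zero_le_one (hw i')
  have hoptS : opt ≤ S := by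
    rw [hopt]
    apply csInf_le
    · refine ⟨0, ?_⟩
      rintro x ⟨C', _, rfl⟩
      exact Finset.sum_nonneg fun i' _ => mul_nonneg (hwnn i') (sq_nonneg _)
    · exact ⟨C, ⟨f, hf, hCeq⟩, rfl⟩
  have hkey : ∀ i', rowDistSq (A' i') C ≤
      2 * rowDistSq (A i') C + 2 * ∑ l, (A i' l - A' i' l) ^ 2 := by
    intro i'
    have h := rowDistSq_move (A' i') (A i') C
    have hsymm : ∑ l, (A' i' l - A i' l) ^ 2 = ∑ l, (A i' l - A' i' l) ^ 2 :=
      Finset.sum_congr rfl fun l _ => by ring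
    rw [hsymm] at h
    exact h
  have hMsum : S' ≤ 2 * S + 2 * (∑ i', w i' * ∑ l, (A i' l - A' i' l) ^ 2) := by
    have h1 : S' ≤ ∑ i', w i' * (2 * rowDistSq (A i') C + 2 * ∑ l, (A i' l - A' i' l) ^ 2) :=
      Finset.sum_le_sum fun i' _ => mul_le_mul_of_nonneg_left (hkey i') (hwnn i')
    have h2 : ∑ i', w i' * (2 * rowDistSq (A i') C + 2 * ∑ l, (A i' l - A' i' l) ^ 2) =
        2 * S + 2 * (∑ i', w i' * ∑ l, (A i' l - A' i' l) ^ 2) := by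
      rw [hSdef, Finset.mul_sum, Finset.mul_sum, ← Finset.sum_add_distrib]
      exact Finset.sum_congr rfl fun i' _ => by ring
    linarith
  have hS'le : S' ≤ (2 + 2 * α) * S := by nlinarith
  set a := w i * rowDistSq (A i) C with ha_def
  set b := w i * rowDistSq (A' i) C with hb_def
  set m := w i * ∑ l, (A i l - A' i l) ^ 2 with hm_def
  have ha : 0 ≤ a := mul_nonneg (hwnn i) (sq_nonneg _)
  have hb : 0 ≤ b := mul_nonneg (hwnn i) (sq_nonneg _)
  have hm : 0 ≤ m := mul_nonneg (hwnn i)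
    (Finset.sum_nonneg fun l _ => sq_nonneg _)
  have hab : a ≤ 2 * b + 2 * m := by
    have h := mul_le_mul_of_nonneg_left (rowDistSq_move (A i) (A' i) C) (hwnn i)
    rw [ha_def, hb_def, hm_def]
    nlinarith [h]
  have key2 : 2 * b / S ≤ (4 + 4 * α) * (b / S') := by
    rw [mul_div_assoc', div_le_div_iff₀ hS hS']
    nlinarith [mul_le_mul_of_nonneg_left hS'le hb]
  have key3 : 2 * m / S ≤ (4 + 4 * α) * (m / opt) := by
    rw [mul_div_assoc', div_le_div_iff₀ hS hopt_pos]
    nlinarith [mul_le_mul_of_nonneg_left hoptS hm, mul_nonneg hm hS.le,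
      mul_nonneg hα (mul_nonneg hm hS.le)]
  have key1 : a / S ≤ (2 * b + 2 * m) / S := by gcongr
  have hsplit : (2 * b + 2 * m) / S = 2 * b / S + 2 * m / S := by ring
  have hrhs : (4 + 4 * α) * (b / S' + m / opt) =
      (4 + 4 * α) * (b / S') + (4 + 4 * α) * (m / opt) := by ring
  rw [hrhs]
  linarith
end
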